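/- arXiv:1911.12985 — 7 statements merged into one kernel-verified Lean document; each statement's English description precedes it below -/
import Mathlib

section
/- Let R be a singular irreducible M-matrix of size n×n and Q a nonnegative diagonal matrix with at least one strictly positive diagonal entry. Then every eigenvalue of R + Q has strictly positive real part; in particular R + Q is nonsingular. -/
open Matrix

/-- Irreducibility: for every nontrivial partition there is a nonzero cross entry. -/
def IsIrred {n : ℕ} (A : Matrix (Fin n) (Fin n) ℝ) : Prop :=
  ∀ S : Set (Fin n), S.Nonempty → Sᶜ.Nonempty → ∃ i ∈ S, ∃ j ∈ Sᶜ, A i j ≠ 0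

/-- The spectral radius of a real matrix: the largest modulus of a (complex) eigenvalue. -/
noncomputable def specRad {n : ℕ} (B : Matrix (Fin n) (Fin n) ℝ) : ℝ :=
  sSup {r : ℝ | ∃ μ ∈ spectrum ℂ (B.map (Complex.ofReal)), ‖μ‖ = r}

open scoped NNReal ENNReal

lemma mulVec_entry {n : ℕ} {α : Type*} [NonUnitalNonAssocSemiring α]
    (A : Matrix (Fin n) (Fin n) α) (v : Fin n → α) (i : Fin n) :
    (A *ᵥ v) i = ∑ j, A i j * v j := rfl

lemma mulVec_nonneg {n : ℕ} {A : Matrix (Fin n) (Fin n) ℝ} (hA : ∀ i j, 0 ≤ A i j)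
    {v : Fin n → ℝ} (hv : ∀ i, 0 ≤ v i) (i : Fin n) : 0 ≤ (A *ᵥ v) i := by
  rw [mulVec_entry]
  exact Finset.sum_nonneg fun j _ => mul_nonneg (hA i j) (hv j)

lemma mulVec_pos_entry {n : ℕ} {A : Matrix (Fin n) (Fin n) ℝ} (hA : ∀ i j, 0 ≤ A i j)
    {v : Fin n → ℝ} (hv : ∀ i, 0 ≤ v i) {i j : Fin n} (hij : A i j ≠ 0) (hj : 0 < v j) :
    0 < (A *ᵥ v) i := by
  have h1 : 0 < A i j * v j := mul_pos (lt_of_le_of_ne (hA i j) (Ne.symm hij)) hj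
  rw [mulVec_entry]
  calc (0:ℝ) < A i j * v j := h1
    _ ≤ ∑ j', A i j' * v j' :=
        Finset.single_le_sum (fun j' _ => mul_nonneg (hA i j') (hv j')) (Finset.mem_univ j)

/-- support propagation: (1+C)^(n-1) *ᵥ w is strictly positive. -/
lemma irred_pos {n : ℕ} {C : Matrix (Fin n) (Fin n) ℝ}
    (hC : ∀ i j, 0 ≤ C i j) (hirr : IsIrred C)
    {w : Fin n → ℝ} (hw : ∀ i, 0 ≤ w i) (hw0 : w ≠ 0) :
    ∀ i, 0 < (((1 + C) ^ (n - 1)) *ᵥ w) i := by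
  classical
  set u : ℕ → Fin n → ℝ := fun k => ((1 + C) ^ k) *ᵥ w with hu
  have hu0 : u 0 = w := by simp [hu]
  have husucc : ∀ k, u (k + 1) = u k + C *ᵥ u k := by
    intro k
    have h : (1 + C) ^ (k + 1) = (1 + C) * (1 + C) ^ k := by rw [pow_succ']
    simp [hu, h, ← Matrix.mulVec_mulVec, Matrix.add_mulVec, Matrix.one_mulVec]
  have hnonneg : ∀ k i, 0 ≤ u k i := by
    intro k
    induction k with
    | zero => simpa [hu0] using hw
    | succ k ih =>
      intro i
      rw [husucc]
      exact add_nonneg (ih i) (mulVec_nonneg hC ih i)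
  have hmono : ∀ k i, 0 < u k i → 0 < u (k + 1) i := by
    intro k i hi
    rw [husucc]
    exact lt_of_lt_of_le hi (le_add_of_nonneg_right (mulVec_nonneg hC (hnonneg k) i))
  obtain ⟨j0, hj0⟩ : ∃ j, w j ≠ 0 := Function.ne_iff.mp hw0
  have hj0' : 0 < w j0 := lt_of_le_of_ne (hw j0) (Ne.symm hj0)
  have hn : 0 < n := j0.pos
  set supp : ℕ → Finset (Fin n) := fun k => Finset.univ.filter (fun i => 0 < u k i) with hsupp
  have hcard : ∀ k, min (k + 1) n ≤ (supp k).card := by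
    intro k
    induction k with
    | zero =>
      have hj : j0 ∈ supp 0 := by simp [hsupp, hu0, hj0']
      have := Finset.card_pos.mpr ⟨j0, hj⟩
      omega
    | succ k ih =>
      have hsub : supp k ⊆ supp (k + 1) := by
        intro i hi
        simp only [hsupp, Finset.mem_filter, Finset.mem_univ, true_and] at hi ⊢
        exact hmono k i hi
      by_cases hall : ∀ i, 0 < u k i
      · have huniv : supp k = Finset.univ := by
          apply Finset.eq_univ_of_forall; intro i; simp [hsupp, hall i]
        have h1 : n ≤ (supp (k+1)).card := by
          have h2 := Finset.card_le_card hsub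
          rw [huniv, Finset.card_univ, Fintype.card_fin] at h2
          omega
        omega
      · push_neg at hall
        obtain ⟨i0, hi0⟩ := hall
        obtain ⟨jS, hjS⟩ : (supp k).Nonempty := Finset.card_pos.mp (by omega)
        have hjS' : 0 < u k jS := by
          simpa [hsupp, Finset.mem_filter] using hjS
        obtain ⟨i, hiS, j, hjSc, hCij⟩ :=
          hirr {i | ¬ 0 < u k i} ⟨i0, not_lt.mpr hi0⟩
            ⟨jS, by simp only [Set.mem_compl_iff, Set.mem_setOf_eq, not_not]; exact hjS'⟩
        have hjpos : 0 < u k j := by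
          simpa only [Set.mem_compl_iff, Set.mem_setOf_eq, not_not] using hjSc
        have hinew : 0 < u (k + 1) i := by
          rw [husucc]
          have := mulVec_pos_entry hC (hnonneg k) hCij hjpos
          have h0 : 0 ≤ u k i := hnonneg k i
          simpa using add_pos_of_nonneg_of_pos h0 this
        have hinotold : i ∉ supp k := by
          simp only [hsupp, Finset.mem_filter, Finset.mem_univ, true_and]
          exact hiS
        have hins : insert i (supp k) ⊆ supp (k + 1) := by
          intro x hx
          rcases Finset.mem_insert.mp hx with rfl | hx
          · simp only [hsupp, Finset.mem_filter, Finset.mem_univ, true_and]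
            exact hinew
          · exact hsub hx
        have h3 : (supp k).card + 1 ≤ (supp (k+1)).card := by
          have := Finset.card_le_card hins
          rwa [Finset.card_insert_of_notMem hinotold] at this
        omega
  have hfull : supp (n - 1) = Finset.univ := by
    apply Finset.eq_univ_of_card
    have := hcard (n - 1)
    have h2 : (supp (n-1)).card ≤ n := by
      simpa using Finset.card_le_card (Finset.subset_univ (supp (n-1)))
    rw [Fintype.card_fin]
    omega
  intro i
  have : i ∈ supp (n - 1) := hfull ▸ Finset.mem_univ i
  simpa [hsupp, Finset.mem_filter] using this

attribute [local instance] Matrix.linftyOpNormedAddCommGroup Matrix.linftyOpNormedSpace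
  Matrix.linftyOpNormedRing Matrix.linftyOpNormedAlgebra

lemma pow_entry_nonneg {n : ℕ} {C : Matrix (Fin n) (Fin n) ℝ} (hC : ∀ i j, 0 ≤ C i j) :
    ∀ k i j, 0 ≤ (C ^ k) i j := by
  intro k
  induction k with
  | zero => intro i j; by_cases h : i = j <;> simp [pow_zero, Matrix.one_apply, h]
  | succ k ih =>
    intro i j
    rw [pow_succ, Matrix.mul_apply]
    exact Finset.sum_nonneg fun l _ => mul_nonneg (ih i l) (hC l j)

lemma le_specRad {n : ℕ} {C : Matrix (Fin n) (Fin n) ℝ}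
    (hC : ∀ i j, 0 ≤ C i j) {y : Fin n → ℝ} (hy : ∀ i, 0 ≤ y i) (hy0 : y ≠ 0)
    {t : ℝ} (ht : 0 ≤ t) (h : ∀ i, t * y i ≤ (C *ᵥ y) i) :
    t ≤ specRad C := by
  classical
  obtain ⟨j0, hj0⟩ := Function.ne_iff.mp hy0
  have hj0' : 0 < y j0 := lt_of_le_of_ne (hy j0) (Ne.symm hj0)
  haveI : Nonempty (Fin n) := ⟨j0⟩
  set M : Matrix (Fin n) (Fin n) ℂ := C.map Complex.ofReal with hM
  haveI : CompleteSpace (Matrix (Fin n) (Fin n) ℂ) := FiniteDimensional.complete ℂ _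
  -- step A
  have powLB : ∀ k i, t ^ k * y i ≤ ((C ^ k) *ᵥ y) i := by
    intro k
    induction k with
    | zero => intro i; simp [Matrix.one_mulVec]
    | succ k ih =>
      intro i
      have hstep : ((C ^ (k+1)) *ᵥ y) i = ∑ j, C i j * ((C ^ k) *ᵥ y) j := by
        rw [pow_succ', ← Matrix.mulVec_mulVec, mulVec_entry]
      rw [hstep]
      calc t ^ (k+1) * y i = t ^ k * (t * y i) := by ring
        _ ≤ t ^ k * (C *ᵥ y) i := by
            exact mul_le_mul_of_nonneg_left (h i) (pow_nonneg ht k)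
        _ = ∑ j, C i j * (t ^ k * y j) := by
            rw [mulVec_entry, Finset.mul_sum]; congr 1; ext j; ring
        _ ≤ ∑ j, C i j * ((C ^ k) *ᵥ y) j := by
            refine Finset.sum_le_sum fun j _ => mul_le_mul_of_nonneg_left (ih j) (hC i j)
  -- step B/C
  obtain ⟨i0, hi0⟩ := Finite.exists_max y
  have hi0pos : 0 < y i0 := lt_of_lt_of_le hj0' (hi0 j0)
  have hMk : ∀ k : ℕ, M ^ k = (C ^ k).map Complex.ofReal := by
    intro k
    induction k with
    | zero =>
      ext i j
      by_cases hij : i = j <;> simp [Matrix.one_apply, hij, Matrix.map_apply]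
    | succ k ih =>
      rw [pow_succ, pow_succ, ih]
      ext i j
      simp only [Matrix.mul_apply, Matrix.map_apply, hM]
      push_cast
      ring
  have normLB : ∀ k : ℕ, t ^ k ≤ ‖M ^ k‖ := by
    intro k
    have hrow : ∑ j, (C ^ k) i0 j ≤ ‖M ^ k‖ := by
      have h1 : (∑ j, ‖(M ^ k) i0 j‖₊ : ℝ≥0) ≤ ‖M ^ k‖₊ := by
        rw [Matrix.linfty_opNNNorm_def]
        exact Finset.le_sup (f := fun i => ∑ j, ‖(M ^ k) i j‖₊) (Finset.mem_univ i0)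
      have h2 : ∑ j, ‖(M ^ k) i0 j‖ ≤ ‖M ^ k‖ := by
        simpa [NNReal.coe_sum] using NNReal.coe_le_coe.mpr h1
      refine le_trans (le_of_eq ?_) h2
      refine Finset.sum_congr rfl fun j _ => ?_
      rw [hMk k, Matrix.map_apply, Complex.norm_real, Real.norm_of_nonneg (pow_entry_nonneg hC k i0 j)]
    have hb : t ^ k * y i0 ≤ (∑ j, (C ^ k) i0 j) * y i0 := by
      calc t ^ k * y i0 ≤ ((C ^ k) *ᵥ y) i0 := powLB k i0
        _ = ∑ j, (C ^ k) i0 j * y j := mulVec_entry _ _ _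
        _ ≤ ∑ j, (C ^ k) i0 j * y i0 := by
            refine Finset.sum_le_sum fun j _ =>
              mul_le_mul_of_nonneg_left (hi0 j) (pow_entry_nonneg hC k i0 j)
        _ = (∑ j, (C ^ k) i0 j) * y i0 := by rw [Finset.sum_mul]
    have := le_of_mul_le_mul_right hb hi0pos
    exact this.trans hrow
  -- step D
  have hfreq : ∀ k : ℕ, 1 ≤ k →
      ENNReal.ofReal t ≤ (‖M ^ k‖₊ : ℝ≥0∞) ^ (1 / (k:ℝ)) := by
    intro k hk
    have hk0 : (k : ℝ) ≠ 0 := by positivity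
    have h1 : (ENNReal.ofReal t) ^ (k : ℝ) ≤ (‖M ^ k‖₊ : ℝ≥0∞) := by
      rw [ENNReal.ofReal_rpow_of_nonneg ht (by positivity), ← ENNReal.ofReal_coe_nnreal, coe_nnnorm]
      apply ENNReal.ofReal_le_ofReal
      rw [Real.rpow_natCast]
      exact normLB k
    calc ENNReal.ofReal t
        = ((ENNReal.ofReal t) ^ (k:ℝ)) ^ (1/(k:ℝ)) := by
          rw [← ENNReal.rpow_mul, mul_one_div, div_self hk0, ENNReal.rpow_one]
      _ ≤ (‖M ^ k‖₊ : ℝ≥0∞) ^ (1/(k:ℝ)) := by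
          exact ENNReal.rpow_le_rpow h1 (by positivity)
  have hlims : ENNReal.ofReal t ≤
      Filter.limsup (fun k : ℕ => (‖M ^ k‖₊ : ℝ≥0∞) ^ (1 / (k:ℝ))) Filter.atTop := by
    apply Filter.le_limsup_of_frequently_le'
    exact (Filter.eventually_atTop.mpr ⟨1, hfreq⟩).frequently
  have hE := spectrum.limsup_pow_nnnorm_pow_one_div_le_spectralRadius M
  -- step F
  have hsne : (spectrum ℂ M).Nonempty := spectrum.nonempty M
  have hbdd : BddAbove {r : ℝ | ∃ μ' ∈ spectrum ℂ M, ‖μ'‖ = r} := by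
    refine ⟨‖M‖, ?_⟩
    rintro r ⟨μ', hμ', rfl⟩
    exact spectrum.norm_le_norm_of_mem hμ'
  have hspec : spectralRadius ℂ M ≤ ENNReal.ofReal (specRad C) := by
    rw [spectralRadius]
    apply iSup₂_le
    intro μ hμ
    have habs : ‖μ‖ ≤ specRad C :=
      le_csSup hbdd ⟨μ, hμ, rfl⟩
    calc (‖μ‖₊ : ℝ≥0∞) = ENNReal.ofReal ‖μ‖ := by
          rw [← ENNReal.ofReal_coe_nnreal, coe_nnnorm]
      _ ≤ ENNReal.ofReal (specRad C) := ENNReal.ofReal_le_ofReal habs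
  have h0 : 0 ≤ specRad C := by
    obtain ⟨μ, hμ⟩ := hsne
    exact (norm_nonneg μ).trans (le_csSup hbdd ⟨μ, hμ, rfl⟩)
  have hfinal := hlims.trans (hE.trans hspec)
  rwa [ENNReal.ofReal_le_ofReal_iff h0] at hfinal

/-- If R is a singular irreducible M-matrix (R = sI − C with s = ρ(C) > 0, C ≥ 0
irreducible) and Q is a nonnegative diagonal matrix with at least one positive
diagonal entry, then every eigenvalue of R + Q has strictly positive real part;
in particular R + Q is nonsingular. -/
theorem singular_irreducible_M_matrix_plus_diagonal {n : ℕ}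
    (R C : Matrix (Fin n) (Fin n) ℝ) (s : ℝ)
    (hs_pos : 0 < s) (hC_nonneg : ∀ i j, 0 ≤ C i j) (hC_irr : IsIrred C)
    (hR : R = s • (1 : Matrix (Fin n) (Fin n) ℝ) - C)
    (h_singular : s = specRad C)
    (q : Fin n → ℝ) (hq_nonneg : ∀ i, 0 ≤ q i) (hq_pos : ∃ i, 0 < q i) :
    (∀ μ ∈ spectrum ℂ ((R + Matrix.diagonal q).map (Complex.ofReal)), 0 < μ.re) ∧
    (R + Matrix.diagonal q).det ≠ 0 := by
  classical
  obtain ⟨istar, histar⟩ := hq_pos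
  haveI : Nonempty (Fin n) := ⟨istar⟩
  set M : Matrix (Fin n) (Fin n) ℂ := (R + Matrix.diagonal q).map Complex.ofReal with hMdef
  have hMentry : ∀ i j, M i j = (if i = j then ((s:ℂ) + (q i:ℂ)) else 0) - (C i j : ℂ) := by
    intro i j
    by_cases hij : i = j <;>
      simp only [hMdef, hR, Matrix.map_apply, Matrix.add_apply, Matrix.sub_apply,
        Matrix.smul_apply, Matrix.one_apply, Matrix.diagonal_apply, hij, if_true, if_false,
        smul_eq_mul] <;> push_cast <;> ring
  have key : ∀ μ ∈ spectrum ℂ M, 0 < μ.re := by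
    intro μ hμ
    by_contra hre
    push_neg at hre
    -- obtain an eigenvector
    have hdet : ((algebraMap ℂ (Matrix (Fin n) (Fin n) ℂ)) μ - M).det = 0 := by
      by_contra hd
      exact (spectrum.mem_iff.mp hμ)
        ((Matrix.isUnit_iff_isUnit_det _).mpr (isUnit_iff_ne_zero.mpr hd))
    obtain ⟨v, hv0, hv⟩ := (Matrix.exists_mulVec_eq_zero_iff).mpr hdet
    have hMveq : M *ᵥ v = μ • v := by
      rw [Matrix.sub_mulVec] at hv
      have h2 : (algebraMap ℂ (Matrix (Fin n) (Fin n) ℂ) μ) *ᵥ v = μ • v := by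
        rw [Algebra.algebraMap_eq_smul_one, Matrix.smul_mulVec, Matrix.one_mulVec]
      rw [h2] at hv
      exact (sub_eq_zero.mp hv).symm
    have hcomp : ∀ i, (((s:ℂ) + (q i:ℂ)) - μ) * v i = ∑ j, (C i j : ℂ) * v j := by
      intro i
      have e1 : (M *ᵥ v) i = μ * v i := by rw [hMveq]; simp
      have e2 : (M *ᵥ v) i = ((s:ℂ) + (q i:ℂ)) * v i - ∑ j, (C i j : ℂ) * v j := by
        rw [mulVec_entry]
        simp only [hMentry, sub_mul, ite_mul, zero_mul, Finset.sum_sub_distrib,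
          Finset.sum_ite_eq, Finset.mem_univ, if_true]
      linear_combination e2.symm.trans e1
    set w : Fin n → ℝ := fun i => ‖v i‖ with hwdef
    have hwnn : ∀ i, 0 ≤ w i := fun i => norm_nonneg _
    have hw0 : w ≠ 0 := by
      intro hcon
      apply hv0
      funext i
      have h3 := congrFun hcon i
      simp only [hwdef, Pi.zero_apply] at h3
      exact norm_eq_zero.mp h3
    have hsub : ∀ i, (s + q i) * w i ≤ (C *ᵥ w) i := by
      intro i
      have h3 : ‖∑ j, (C i j:ℂ) * v j‖ ≤ (C *ᵥ w) i := by
        rw [mulVec_entry]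
        calc ‖∑ j, (C i j:ℂ) * v j‖ ≤ ∑ j, ‖(C i j:ℂ) * v j‖ :=
              norm_sum_le _ _
          _ = ∑ j, C i j * w j := Finset.sum_congr rfl fun j _ => by
              rw [norm_mul, Complex.norm_real, Real.norm_of_nonneg (hC_nonneg i j)]
      have h5 : s + q i ≤ ‖((s:ℂ) + (q i:ℂ)) - μ‖ := by
        have h6 := Complex.re_le_norm (((s:ℂ) + (q i:ℂ)) - μ)
        simp only [Complex.sub_re, Complex.add_re, Complex.ofReal_re] at h6
        linarith
      have h4 : (s + q i) * w i ≤ ‖(((s:ℂ) + (q i:ℂ)) - μ) * v i‖ := by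
        rw [norm_mul]
        exact mul_le_mul_of_nonneg_right h5 (norm_nonneg _)
      rw [hcomp i] at h4
      exact h4.trans h3
    by_cases hEq : C *ᵥ w = s • w
    · -- equality case
      have hqw : ∀ i, q i * w i = 0 := by
        intro i
        have h6 := hsub i
        rw [hEq] at h6
        simp only [Pi.smul_apply, smul_eq_mul] at h6
        have h7 : 0 ≤ q i * w i := mul_nonneg (hq_nonneg i) (hwnn i)
        nlinarith
      have hwpos : ∀ i, 0 < w i := by
        by_contra hcon
        push_neg at hcon
        obtain ⟨i1, hi1⟩ := hcon
        obtain ⟨j1, hj1⟩ : ∃ j, w j ≠ 0 := Function.ne_iff.mp hw0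
        have hj1' : 0 < w j1 := lt_of_le_of_ne (hwnn j1) (Ne.symm hj1)
        obtain ⟨i, hiS, j, hjS, hCij⟩ :=
          hC_irr {i | ¬ 0 < w i} ⟨i1, not_lt.mpr hi1⟩
            ⟨j1, by simp only [Set.mem_compl_iff, Set.mem_setOf_eq, not_not]; exact hj1'⟩
        have hjpos : 0 < w j := by
          simpa only [Set.mem_compl_iff, Set.mem_setOf_eq, not_not] using hjS
        have hpos := mulVec_pos_entry hC_nonneg hwnn hCij hjpos
        rw [hEq] at hpos
        have hwi : w i = 0 := le_antisymm (not_lt.mp hiS) (hwnn i)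
        simp only [Pi.smul_apply, smul_eq_mul, hwi, mul_zero] at hpos
        exact lt_irrefl 0 hpos
      exact absurd (hqw istar) (ne_of_gt (mul_pos histar (hwpos istar)))
    · -- strict case
      set u : Fin n → ℝ := C *ᵥ w - s • w with hudef
      have hu_nonneg : ∀ i, 0 ≤ u i := by
        intro i
        have h6 := hsub i
        have h7 : 0 ≤ q i * w i := mul_nonneg (hq_nonneg i) (hwnn i)
        simp only [hudef, Pi.sub_apply, Pi.smul_apply, smul_eq_mul]
        nlinarith
      have hu0 : u ≠ 0 := by
        intro hcon
        exact hEq (by rwa [hudef, sub_eq_zero] at hcon)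
      set k := n - 1 with hk
      set y : Fin n → ℝ := ((1 + C) ^ k) *ᵥ w with hydef
      set z : Fin n → ℝ := ((1 + C) ^ k) *ᵥ u with hzdef
      have hy := irred_pos hC_nonneg hC_irr hwnn hw0
      have hz := irred_pos hC_nonneg hC_irr hu_nonneg hu0
      have hcomm : Commute C ((1 + C) ^ k) :=
        ((Commute.one_right C).add_right (Commute.refl C)).pow_right k
      have hCy : C *ᵥ y - s • y = z := by
        rw [hydef, hzdef, hudef, Matrix.mulVec_mulVec, hcomm.eq, ← Matrix.mulVec_mulVec]
        rw [Matrix.mulVec_sub, Matrix.mulVec_smul]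
      have hyn : ∀ i, 0 ≤ y i := fun i => (hy i).le
      have hy0' : y ≠ 0 := by
        intro hcon
        have := congrFun hcon istar
        simp only [Pi.zero_apply] at this
        exact (hy istar).ne' this
      set zmin := Finset.univ.inf' Finset.univ_nonempty (fun i => z i) with hzmin
      set ymax := Finset.univ.sup' Finset.univ_nonempty (fun i => y i) with hymax
      have hzmin_pos : 0 < zmin := by
        rw [hzmin, Finset.lt_inf'_iff]
        exact fun i _ => hz i
      have hymax_pos : 0 < ymax := by
        rw [hymax, Finset.lt_sup'_iff]
        exact ⟨istar, Finset.mem_univ istar, hy istar⟩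
      set ε := zmin / ymax with hε
      have hε_pos : 0 < ε := div_pos hzmin_pos hymax_pos
      have hty : ∀ i, (s + ε) * y i ≤ (C *ᵥ y) i := by
        intro i
        have h8 : ε * y i ≤ zmin := by
          calc ε * y i ≤ ε * ymax :=
                mul_le_mul_of_nonneg_left (Finset.le_sup' _ (Finset.mem_univ i)) hε_pos.le
            _ = zmin := by rw [hε, div_mul_cancel₀ _ (ne_of_gt hymax_pos)]
        have h9 : zmin ≤ z i := Finset.inf'_le _ (Finset.mem_univ i)
        have h10 := congrFun hCy i
        simp only [Pi.sub_apply, Pi.smul_apply, smul_eq_mul] at h10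
        nlinarith
      have hfin := le_specRad hC_nonneg hyn hy0' (by linarith : (0:ℝ) ≤ s + ε) hty
      rw [← h_singular] at hfin
      linarith
  refine ⟨key, ?_⟩
  intro hd
  have hdetC : M.det = 0 := by
    have h1 : M = Complex.ofRealHom.mapMatrix (R + Matrix.diagonal q) := rfl
    rw [h1, ← RingHom.map_det, hd, map_zero]
  have h0 : (0:ℂ) ∈ spectrum ℂ M := by
    rw [spectrum.zero_mem_iff]
    intro hu
    have := (Matrix.isUnit_iff_isUnit_det M).mp hu
    rw [hdetC] at this
    exact not_isUnit_zero this
  simpa using key 0 h0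
end

section
/- Let A be an n×n real matrix with positive diagonal entries. If there exists a positive diagonal matrix D such that AD is strictly diagonally dominant (i.e., d_i·a_ii > Σ_{j≠i} d_j·|a_ij| for all i), then there exists a positive diagonal matrix C such that AC + C·Aᵀ is positive definite. -/
open Matrix Finset

/-- comparison matrix -/
private def cmx {n : ℕ} (A : Matrix (Fin n) (Fin n) ℝ) : Matrix (Fin n) (Fin n) ℝ :=
  Matrix.of fun i j => if i = j then A i i else -|A i j|

private lemma cmx_diag {n : ℕ} (A : Matrix (Fin n) (Fin n) ℝ) (i : Fin n) :
    cmx A i i = A i i := if_pos rfl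

private lemma cmx_off {n : ℕ} (A : Matrix (Fin n) (Fin n) ℝ) {i j : Fin n} (h : i ≠ j) :
    cmx A i j = -|A i j| := if_neg h

lemma exists_col_weights {n : ℕ} (A : Matrix (Fin n) (Fin n) ℝ)
    (hdiag : ∀ i, 0 < A i i) (d : Fin n → ℝ) (hd : ∀ i, 0 < d i)
    (hdom : ∀ i, ∑ j ∈ Finset.univ.erase i, d j * |A i j| < d i * A i i) :
    ∃ e : Fin n → ℝ, (∀ i, 0 < e i) ∧
      ∀ j, ∑ i ∈ Finset.univ.erase j, e i * |A i j| < e j * A j j := by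
  classical
  set M : Matrix (Fin n) (Fin n) ℝ := cmx A
  set δ : ℝ := 1 + ∑ i, A i i with hδdef
  have hδ : 0 < δ := by
    have : (0:ℝ) ≤ ∑ i, A i i := Finset.sum_nonneg fun i _ => (hdiag i).le
    simp only [hδdef]; linarith
  have hδ2 : ∀ i, A i i < δ := by
    intro i
    have : A i i ≤ ∑ k, A k k :=
      Finset.single_le_sum (fun k _ => (hdiag k).le) (Finset.mem_univ i)
    simp only [hδdef]; linarith
  set v : Fin n ⊕ Fin n → (Fin n → ℝ) :=
    Sum.elim (fun j => fun i => M i j) (fun i => Pi.single i δ) with hv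
  have hvl : ∀ j i, v (Sum.inl j) i = M i j := fun j i => rfl
  have hMdiag : ∀ i, M i i = A i i := fun i => cmx_diag A i
  have hMoff : ∀ i j, i ≠ j → M i j = -|A i j| := fun i j h => cmx_off A h
  have hvr : ∀ i i', v (Sum.inr i) i' = if i' = i then δ else 0 := by
    intro i i'
    simp only [hv, Sum.elim_inr, Pi.single_apply]
  -- injectivity of v
  have hvinj : Function.Injective v := by
    intro k k' hkk
    match k, k' with
    | Sum.inl j, Sum.inl j' =>
      by_contra hne
      have hjj : j ≠ j' := by simpa using hne
      have h1 := congrFun hkk j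
      rw [hvl, hvl, hMdiag j, hMoff j j' hjj] at h1
      have h2 : -|A j j'| ≤ 0 := neg_nonpos.mpr (abs_nonneg _)
      linarith [hdiag j]
    | Sum.inl j, Sum.inr i =>
      exfalso
      have h1 := congrFun hkk j
      rw [hvl, hvr, hMdiag j] at h1
      by_cases hij : j = i
      · rw [if_pos hij] at h1
        exact absurd h1 (ne_of_lt (hδ2 j))
      · rw [if_neg hij] at h1
        exact absurd h1 (ne_of_gt (hdiag j))
    | Sum.inr i, Sum.inl j =>
      exfalso
      have h1 := congrFun hkk j
      rw [hvl, hvr, hMdiag j] at h1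
      by_cases hij : j = i
      · rw [if_pos hij] at h1
        exact absurd h1.symm (ne_of_lt (hδ2 j))
      · rw [if_neg hij] at h1
        exact absurd h1.symm (ne_of_gt (hdiag j))
    | Sum.inr i, Sum.inr i' =>
      by_contra hne
      have hii : i ≠ i' := by simpa using hne
      have h1 := congrFun hkk i
      rw [hvr, hvr, if_pos rfl, if_neg hii] at h1
      linarith [hδ]
  -- 0 is not in the convex hull of the range of v
  have h0 : (0 : Fin n → ℝ) ∉ convexHull ℝ (Set.range v) := by
    intro hmem
    have hrange : Set.range v = ↑((Finset.univ : Finset (Fin n ⊕ Fin n)).image v) := by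
      simp
    rw [hrange, Finset.mem_convexHull'] at hmem
    obtain ⟨w, hw0, hw1, hwsum⟩ := hmem
    rw [Finset.sum_image (fun a _ b _ h => hvinj h)] at hw1
    rw [Finset.sum_image (fun a _ b _ h => hvinj h)] at hwsum
    set z : Fin n → ℝ := fun j => w (v (Sum.inl j)) with hz
    set y : Fin n → ℝ := fun i => w (v (Sum.inr i)) with hy
    have hznn : ∀ j, 0 ≤ z j := fun j =>
      hw0 _ (Finset.mem_image_of_mem v (Finset.mem_univ (Sum.inl j)))
    have hynn : ∀ i, 0 ≤ y i := fun i =>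
      hw0 _ (Finset.mem_image_of_mem v (Finset.mem_univ (Sum.inr i)))
    have hw1' : ∑ j, z j + ∑ i, y i = 1 := by
      rw [Fintype.sum_sum_type] at hw1
      simp only [hz, hy]
      exact hw1
    have heq : ∀ i, ∑ j, z j * M i j + y i * δ = 0 := by
      intro i
      have h1 := congrFun hwsum i
      rw [Finset.sum_apply] at h1
      simp only [Pi.smul_apply, smul_eq_mul, Pi.zero_apply] at h1
      rw [Fintype.sum_sum_type] at h1
      have h2 : ∑ i' : Fin n, w (v (Sum.inr i')) * v (Sum.inr i') i = y i * δ := by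
        rw [Finset.sum_eq_single i]
        · rw [hvr, if_pos rfl]
        · intro b _ hb
          rw [hvr, if_neg (Ne.symm hb), mul_zero]
        · simp
      have h3 : ∀ j, w (v (Sum.inl j)) * v (Sum.inl j) i = z j * M i j := by
        intro j; rw [hvl]
      simp only [h3] at h1
      rw [h2] at h1
      exact h1
    have hMz : ∀ i, ∑ j, z j * M i j ≤ 0 := by
      intro i
      have := heq i
      linarith [mul_nonneg (hynn i) hδ.le]
    -- z cannot be identically zero
    by_cases hzz : ∀ j, z j = 0
    · have hyy : ∀ i, y i = 0 := by
        intro i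
        have := heq i
        simp only [hzz, zero_mul, Finset.sum_const_zero, zero_add] at this
        exact (mul_eq_zero.mp this).resolve_right hδ.ne'
      simp only [hzz, hyy, Finset.sum_const_zero, add_zero] at hw1'
      exact one_ne_zero hw1'.symm
    · push_neg at hzz
      obtain ⟨k, hk⟩ := hzz
      have hzk : 0 < z k := lt_of_le_of_ne (hznn k) (Ne.symm hk)
      obtain ⟨i, _, hi⟩ := Finset.exists_max_image Finset.univ (fun j => z j / d j)
        ⟨k, Finset.mem_univ k⟩
      set t : ℝ := z i / d i with ht
      have htpos : 0 < t := lt_of_lt_of_le (div_pos hzk (hd k)) (hi k (Finset.mem_univ k))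
      have hzle : ∀ j, z j ≤ t * d j := by
        intro j
        have := hi j (Finset.mem_univ j)
        rw [div_le_iff₀ (hd j)] at this
        linarith [this]
      have hzi : z i = t * d i := by
        rw [ht, div_mul_cancel₀ _ (hd i).ne']
      have hlb : t * (d i * A i i - ∑ j ∈ Finset.univ.erase i, d j * |A i j|)
          ≤ ∑ j, z j * M i j := by
        have hsplit : ∑ j, z j * M i j
            = z i * A i i + ∑ j ∈ Finset.univ.erase i, z j * M i j := by
          rw [← Finset.add_sum_erase _ (fun j => z j * M i j) (Finset.mem_univ i), hMdiag i]
        rw [hsplit, hzi]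
        have hterm : ∀ j ∈ Finset.univ.erase i, -(t * (d j * |A i j|)) ≤ z j * M i j := by
          intro j hj
          have hji : i ≠ j := (Finset.ne_of_mem_erase hj).symm
          rw [hMoff i j hji]
          have h4 : z j * |A i j| ≤ t * d j * |A i j| :=
            mul_le_mul_of_nonneg_right (hzle j) (abs_nonneg _)
          nlinarith [h4]
        have hsum := Finset.sum_le_sum hterm
        have hL : ∑ j ∈ Finset.univ.erase i, -(t * (d j * |A i j|))
            = -(t * ∑ j ∈ Finset.univ.erase i, d j * |A i j|) := by
          rw [Finset.mul_sum]
          rw [Finset.sum_neg_distrib]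
        rw [hL] at hsum
        have hexp : t * (d i * A i i - ∑ j ∈ Finset.univ.erase i, d j * |A i j|)
            = t * d i * A i i - t * ∑ j ∈ Finset.univ.erase i, d j * |A i j| := by ring
        rw [hexp]
        linarith [hsum]
      have hub := hMz i
      have hstrict : 0 < t * (d i * A i i - ∑ j ∈ Finset.univ.erase i, d j * |A i j|) :=
        mul_pos htpos (by linarith [hdom i])
      linarith
  -- separation
  have hfin : (Set.range v).Finite := Set.finite_range v
  obtain ⟨f, u, hu, hsep⟩ := geometric_hahn_banach_point_closed
    (convex_convexHull ℝ (Set.range v)) ((hfin.isCompact_convexHull ℝ).isClosed) h0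
  rw [map_zero] at hu
  have hfpos : ∀ k, 0 < f (v k) := by
    intro k
    have := hsep (v k) (subset_convexHull ℝ _ (Set.mem_range_self k))
    linarith
  set e : Fin n → ℝ := fun i => f (Pi.single i 1) with he
  have hepos : ∀ i, 0 < e i := by
    intro i
    have h1 : v (Sum.inr i) = δ • (Pi.single i 1 : Fin n → ℝ) := by
      ext i'
      rw [hvr, Pi.smul_apply, smul_eq_mul, Pi.single_apply, mul_ite, mul_one, mul_zero]
    have h2 := hfpos (Sum.inr i)
    rw [h1, _root_.map_smul, smul_eq_mul] at h2
    have he' : e i = f (Pi.single i 1) := by simp only [he]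
    rw [← he'] at h2
    rcases mul_pos_iff.mp h2 with h | h
    · exact h.2
    · linarith [hδ, h.1]
  refine ⟨e, hepos, fun j => ?_⟩
  have hcol : v (Sum.inl j) = ∑ i, M i j • (Pi.single i 1 : Fin n → ℝ) := by
    ext i'
    rw [hvl, Finset.sum_apply]
    rw [Finset.sum_eq_single i']
    · rw [Pi.smul_apply, Pi.single_eq_same, smul_eq_mul, mul_one]
    · intro b _ hb
      rw [Pi.smul_apply, Pi.single_apply, if_neg (Ne.symm hb), smul_zero]
    · simp
  have h5 := hfpos (Sum.inl j)
  rw [hcol, map_sum] at h5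
  have h5' : 0 < ∑ i, M i j * e i := by
    simp only [he]
    simpa only [_root_.map_smul, smul_eq_mul] using h5
  have h6 : ∑ i, M i j * e i
      = A j j * e j + ∑ i ∈ Finset.univ.erase j, -(|A i j|) * e i := by
    rw [← Finset.add_sum_erase _ (fun i => M i j * e i) (Finset.mem_univ j), hMdiag j]
    congr 1
    refine Finset.sum_congr rfl fun i hi => ?_
    rw [hMoff i j (Finset.ne_of_mem_erase hi)]
  rw [h6] at h5'
  have h7 : ∑ i ∈ Finset.univ.erase j, -(|A i j|) * e i
      = -∑ i ∈ Finset.univ.erase j, e i * |A i j| := by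
    rw [← Finset.sum_neg_distrib]
    exact Finset.sum_congr rfl fun i _ => by ring
  rw [h7] at h5'
  linarith [h5']
lemma cross_bound (p q a b s : ℝ) (hp : 0 < p) (hq : 0 < q) :
    -(|s| * (q / p * a ^ 2 + p / q * b ^ 2) / 2) ≤ a * s * b := by
  have h1 : -(|s| * (|a| * |b|)) ≤ a * s * b := by
    have : |a * s * b| = |s| * (|a| * |b|) := by
      rw [abs_mul, abs_mul]; ring
    nlinarith [neg_abs_le (a * s * b), this.ge, this.le]
  refine le_trans (neg_le_neg ?_) h1
  have hab : |a| * |b| ≤ (q / p * a ^ 2 + p / q * b ^ 2) / 2 := by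
    have h2 := sq_nonneg (q * |a| - p * |b|)
    have h3 : (0:ℝ) < p * q := mul_pos hp hq
    rw [le_div_iff₀ (by norm_num : (0:ℝ) < 2)]
    have key : (q / p * a ^ 2 + p / q * b ^ 2) * (p * q) = q ^ 2 * a ^ 2 + p ^ 2 * b ^ 2 := by
      field_simp
    rw [← mul_le_mul_iff_left₀ h3, key]
    nlinarith [sq_abs a, sq_abs b]
  calc |s| * (q / p * a ^ 2 + p / q * b ^ 2) / 2
      = |s| * ((q / p * a ^ 2 + p / q * b ^ 2) / 2) := by ring
    _ ≥ |s| * (|a| * |b|) := mul_le_mul_of_nonneg_left hab (abs_nonneg s)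

/-- A symmetric real matrix that is generalized strictly diagonally dominant
(with positive weights `g`) and has positive diagonal is positive definite. -/
lemma posdef_of_gdd {n : ℕ} (S : Matrix (Fin n) (Fin n) ℝ)
    (hsym : ∀ i j, S j i = S i j)
    (g : Fin n → ℝ) (hg : ∀ i, 0 < g i)
    (hdd : ∀ i, ∑ j ∈ Finset.univ.erase i, g j * |S i j| < g i * S i i) :
    S.PosDef := by
  refine posDef_iff_dotProduct_mulVec.mpr ⟨?_, ?_⟩
  · ext i j
    simp [conjTranspose_apply, hsym i j]
  · intro x hx
    have hQ : dotProduct (star x) (S *ᵥ x) = ∑ i, ∑ j, x i * S i j * x j := by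
      simp [dotProduct, mulVec, Finset.mul_sum, mul_assoc]
    rw [hQ]
    set u : Fin n → Fin n → ℝ := fun a b => |S a b| * (g b / g a) * x a ^ 2 / 2 with hu
    set G : Fin n → ℝ := fun i => ∑ j ∈ Finset.univ.erase i, g j * |S i j| with hG
    have hpt : ∀ i, ∀ j ∈ Finset.univ.erase i, -(u i j + u j i) ≤ x i * S i j * x j := by
      intro i j _
      have := cross_bound (g i) (g j) (x i) (x j) (S i j) (hg i) (hg j)
      refine le_trans (le_of_eq ?_) this
      rw [hu]
      simp only []
      rw [hsym i j]
      field_simp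
    have hsum_bound : ∀ i, -∑ j ∈ Finset.univ.erase i, (u i j + u j i)
        ≤ ∑ j ∈ Finset.univ.erase i, x i * S i j * x j := by
      intro i
      rw [← Finset.sum_neg_distrib]
      exact Finset.sum_le_sum (hpt i)
    have hswap : ∑ i, ∑ j ∈ Finset.univ.erase i, u j i
        = ∑ i, ∑ j ∈ Finset.univ.erase i, u i j := by
      rw [Finset.sum_comm' (s' := fun j => Finset.univ.erase j) (t' := Finset.univ)
        (fun a b => by simp [Finset.mem_erase, ne_comm])]
    have hdouble : ∑ i, ∑ j ∈ Finset.univ.erase i, (u i j + u j i)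
        = ∑ i, x i ^ 2 / g i * G i := by
      have h2 : ∀ i, x i ^ 2 / g i * G i = ∑ j ∈ Finset.univ.erase i, 2 * u i j := by
        intro i
        rw [hG, Finset.mul_sum]
        refine Finset.sum_congr rfl fun j _ => ?_
        rw [hu]
        ring
      calc ∑ i, ∑ j ∈ Finset.univ.erase i, (u i j + u j i)
          = (∑ i, ∑ j ∈ Finset.univ.erase i, u i j)
            + ∑ i, ∑ j ∈ Finset.univ.erase i, u j i := by
            rw [← Finset.sum_add_distrib]
            exact Finset.sum_congr rfl fun i _ => Finset.sum_add_distrib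
        _ = ∑ i, ∑ j ∈ Finset.univ.erase i, 2 * u i j := by
            rw [hswap, ← Finset.sum_add_distrib]
            refine Finset.sum_congr rfl fun i _ => ?_
            rw [← Finset.sum_add_distrib]
            exact Finset.sum_congr rfl fun j _ => by ring
        _ = ∑ i, x i ^ 2 / g i * G i := by
            exact Finset.sum_congr rfl fun i _ => (h2 i).symm
    have hmain : ∑ i, x i ^ 2 / g i * (g i * S i i - G i) ≤ ∑ i, ∑ j, x i * S i j * x j := by
      calc ∑ i, x i ^ 2 / g i * (g i * S i i - G i)
          = ∑ i, (x i * S i i * x i - x i ^ 2 / g i * G i) := by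
            refine Finset.sum_congr rfl fun i _ => ?_
            have hgi := (hg i).ne'
            field_simp
        _ = ∑ i, x i * S i i * x i - ∑ i, ∑ j ∈ Finset.univ.erase i, (u i j + u j i) := by
            rw [hdouble, Finset.sum_sub_distrib]
        _ ≤ ∑ i, x i * S i i * x i
            + ∑ i, ∑ j ∈ Finset.univ.erase i, x i * S i j * x j := by
            have := Finset.sum_le_sum (fun i (_ : i ∈ Finset.univ) => hsum_bound i)
            simp only [Finset.sum_neg_distrib] at this
            linarith [this]
        _ = ∑ i, ∑ j, x i * S i j * x j := by
            rw [← Finset.sum_add_distrib]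
            refine Finset.sum_congr rfl fun i _ => ?_
            exact Finset.add_sum_erase _ (fun j => x i * S i j * x j) (Finset.mem_univ i)
    refine lt_of_lt_of_le ?_ hmain
    obtain ⟨k, hk⟩ := Function.ne_iff.mp hx
    refine Finset.sum_pos' (fun i _ => ?_) ⟨k, Finset.mem_univ k, ?_⟩
    · have h1 : 0 ≤ x i ^ 2 / g i := div_nonneg (sq_nonneg _) (hg i).le
      have h2 : 0 ≤ g i * S i i - G i := by linarith [hdd i]
      exact mul_nonneg h1 h2
    · have h1 : 0 < x k ^ 2 / g k := div_pos (pow_two_pos_of_ne_zero hk) (hg k)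
      have h2 : 0 < g k * S k k - G k := by linarith [hdd k]
      exact mul_pos h1 h2

/-- C1 ⟹ C2: if A has positive diagonal and AD is strictly diagonally dominant for
some positive diagonal D, then there is a positive diagonal C with A C + C Aᵀ
positive definite. -/
theorem diag_dominance_implies_lyapunov_diagonal {n : ℕ}
    (A : Matrix (Fin n) (Fin n) ℝ)
    (hdiag : ∀ i, 0 < A i i)
    (hdom : ∃ d : Fin n → ℝ, (∀ i, 0 < d i) ∧
      ∀ i, ∑ j ∈ Finset.univ.erase i, d j * |A i j| < d i * A i i) :
    ∃ c : Fin n → ℝ, (∀ i, 0 < c i) ∧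
      (A * Matrix.diagonal c + Matrix.diagonal c * Aᵀ).PosDef := by
  obtain ⟨d, hd, hdomd⟩ := hdom
  obtain ⟨e, he, hcolw⟩ := exists_col_weights A hdiag d hd hdomd
  set c : Fin n → ℝ := fun i => d i / e i with hc
  have hcpos : ∀ i, 0 < c i := fun i => div_pos (hd i) (he i)
  have hec : ∀ i, e i * c i = d i := by
    intro i
    show e i * (d i / e i) = d i
    rw [mul_comm]
    exact div_mul_cancel₀ (d i) (he i).ne'
  have hS : ∀ i j, (A * Matrix.diagonal c + Matrix.diagonal c * Aᵀ) i j
      = A i j * c j + c i * A j i := by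
    intro i j
    rw [Matrix.add_apply, Matrix.mul_diagonal, Matrix.diagonal_mul, Matrix.transpose_apply]
  refine ⟨c, hcpos, posdef_of_gdd _ (fun i j => by rw [hS, hS]; ring) e he fun i => ?_⟩
  have hpt : ∀ j ∈ Finset.univ.erase i,
      e j * |(A * Matrix.diagonal c + Matrix.diagonal c * Aᵀ) i j|
        ≤ d j * |A i j| + c i * (e j * |A j i|) := by
    intro j _
    rw [hS i j]
    have h1 : |A i j * c j + c i * A j i| ≤ |A i j| * c j + c i * |A j i| := by
      calc |A i j * c j + c i * A j i| ≤ |A i j * c j| + |c i * A j i| := abs_add_le _ _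
        _ = |A i j| * c j + c i * |A j i| := by
            rw [abs_mul, abs_mul, abs_of_pos (hcpos j), abs_of_pos (hcpos i)]
    calc e j * |A i j * c j + c i * A j i|
        ≤ e j * (|A i j| * c j + c i * |A j i|) :=
          mul_le_mul_of_nonneg_left h1 (he j).le
      _ = (e j * c j) * |A i j| + c i * (e j * |A j i|) := by ring
      _ = d j * |A i j| + c i * (e j * |A j i|) := by rw [hec j]
  calc ∑ j ∈ Finset.univ.erase i,
        e j * |(A * Matrix.diagonal c + Matrix.diagonal c * Aᵀ) i j|
      ≤ ∑ j ∈ Finset.univ.erase i, (d j * |A i j| + c i * (e j * |A j i|)) :=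
        Finset.sum_le_sum hpt
    _ = (∑ j ∈ Finset.univ.erase i, d j * |A i j|)
        + c i * ∑ j ∈ Finset.univ.erase i, e j * |A j i| := by
        rw [Finset.sum_add_distrib, Finset.mul_sum]
    _ < d i * A i i + c i * (e i * A i i) :=
        add_lt_add (hdomd i) (mul_lt_mul_of_pos_left (hcolw i) (hcpos i))
    _ = e i * ((A * Matrix.diagonal c + Matrix.diagonal c * Aᵀ) i i) := by
        rw [hS i i]
        have h2 := hec i
        linear_combination (-(A i i)) * h2
end

section
/- Let A be an n×n real matrix with positive diagonal entries. If there exists a positive diagonal matrix C such that AC + CAᵀ is positive definite, then all leading principal minors of A are positive. -/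
open Matrix

/-- If the quadratic form of `M` is positive on nonzero vectors, `det M ≠ 0`. -/
lemma det_ne_zero_of_quad {m : ℕ} {M : Matrix (Fin m) (Fin m) ℝ}
    (hq : ∀ x : Fin m → ℝ, x ≠ 0 → 0 < x ⬝ᵥ (M *ᵥ x)) : M.det ≠ 0 := by
  intro hdet
  obtain ⟨v, hv, hMv⟩ := (Matrix.exists_mulVec_eq_zero_iff).2 hdet
  have := hq v hv
  rw [hMv] at this
  simp at this

/-- If the quadratic form of `M` is positive on nonzero vectors, `0 < det M`. -/
lemma det_pos_of_quad {m : ℕ} {M : Matrix (Fin m) (Fin m) ℝ}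
    (hq : ∀ x : Fin m → ℝ, x ≠ 0 → 0 < x ⬝ᵥ (M *ᵥ x)) : 0 < M.det := by
  set f : ℝ → ℝ := fun t => ((1 - t) • (1 : Matrix (Fin m) (Fin m) ℝ) + t • M).det with hf
  have hcont : Continuous f := by
    apply Continuous.matrix_det
    fun_prop
  have hquad : ∀ t ∈ Set.Icc (0:ℝ) 1, ∀ x : Fin m → ℝ, x ≠ 0 →
      0 < x ⬝ᵥ (((1 - t) • (1 : Matrix (Fin m) (Fin m) ℝ) + t • M) *ᵥ x) := by
    rintro t ⟨ht0, ht1⟩ x hx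
    have hxx : 0 < x ⬝ᵥ x := by
      have hnn : 0 ≤ x ⬝ᵥ x := Finset.sum_nonneg fun i _ => mul_self_nonneg _
      rcases lt_or_eq_of_le hnn with h | h
      · exact h
      · exact absurd (dotProduct_self_eq_zero.mp h.symm) hx
    have : x ⬝ᵥ (((1 - t) • (1 : Matrix (Fin m) (Fin m) ℝ) + t • M) *ᵥ x)
        = (1 - t) * (x ⬝ᵥ x) + t * (x ⬝ᵥ (M *ᵥ x)) := by
      rw [Matrix.add_mulVec, Matrix.smul_mulVec, Matrix.smul_mulVec,
        Matrix.one_mulVec, dotProduct_add, dotProduct_smul, dotProduct_smul]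
      simp [smul_eq_mul]
    rw [this]
    rcases eq_or_lt_of_le ht0 with h0 | h0
    · simp [← h0]; exact hxx
    · have h1 : 0 ≤ (1 - t) * (x ⬝ᵥ x) := mul_nonneg (by linarith) hxx.le
      have h2 : 0 < t * (x ⬝ᵥ (M *ᵥ x)) := mul_pos h0 (hq x hx)
      linarith
  have hne : ∀ t ∈ Set.Icc (0:ℝ) 1, f t ≠ 0 := fun t ht =>
    det_ne_zero_of_quad (hquad t ht)
  have hf0 : f 0 = 1 := by simp [hf]
  have hf1 : f 1 = M.det := by simp [hf]
  by_contra hle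
  push_neg at hle
  have hlt : f 1 < 0 := by
    rw [hf1]
    exact lt_of_le_of_ne hle (by rw [← hf1]; exact hne 1 ⟨zero_le_one, le_refl 1⟩)
  have : (0:ℝ) ∈ f '' Set.Icc 0 1 := by
    apply intermediate_value_Icc' (zero_le_one) hcont.continuousOn
    constructor
    · exact hlt.le
    · rw [hf0]; exact zero_le_one
  obtain ⟨t, ht, hft⟩ := this
  exact hne t ht hft

/-- The quadratic form of an injective principal submatrix of a positive definite
matrix is positive on nonzero vectors. -/
lemma quad_pos_submatrix {m k : ℕ} {M : Matrix (Fin m) (Fin m) ℝ} (hM : M.PosDef)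
    {e : Fin k → Fin m} (he : Function.Injective e) :
    ∀ x : Fin k → ℝ, x ≠ 0 → 0 < x ⬝ᵥ ((M.submatrix e e) *ᵥ x) := by
  intro x hx
  set y : Fin m → ℝ := Function.extend e x 0 with hy
  have hyx : ∀ i, y (e i) = x i := fun i => he.extend_apply x 0 i
  have hy0 : ∀ j, j ∉ Finset.univ.image e → y j = 0 := by
    intro j hj
    apply Function.extend_apply'
    rintro ⟨i, rfl⟩
    exact hj (Finset.mem_image.mpr ⟨i, Finset.mem_univ i, rfl⟩)
  have hyne : y ≠ 0 := by
    intro h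
    apply hx
    funext i
    have := congrFun h (e i)
    rwa [hyx i] at this
  have key : x ⬝ᵥ ((M.submatrix e e) *ᵥ x) = y ⬝ᵥ (M *ᵥ y) := by
    have inner : ∀ j : Fin m, (M *ᵥ y) j = ∑ i' : Fin k, M j (e i') * x i' := by
      intro j
      rw [Matrix.mulVec, dotProduct]
      rw [← Finset.sum_subset (Finset.subset_univ (Finset.univ.image e))
        (fun j' _ hj' => by rw [hy0 j' hj', mul_zero])]
      rw [Finset.sum_image (fun a _ b _ h => he h)]
      simp_rw [hyx]
    rw [dotProduct, dotProduct]
    rw [← Finset.sum_subset (Finset.subset_univ (Finset.univ.image e))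
      (fun j' _ hj' => by simp [hy0 j' hj'])]
    rw [Finset.sum_image (fun a _ b _ h => he h)]
    apply Finset.sum_congr rfl
    intro i _
    rw [inner (e i), hyx i]
    simp [Matrix.mulVec, dotProduct, Matrix.submatrix_apply]
  rw [key]
  have := hM.dotProduct_mulVec_pos hyne
  rwa [star_trivial] at this

/-- C2 ⟹ C3: if A has positive diagonal entries and there is a positive diagonal C
with A C + C Aᵀ positive definite, then all leading principal minors of A are
positive. -/
theorem lyapunov_diagonal_implies_positive_leading_minors {n : ℕ}
    (A : Matrix (Fin n) (Fin n) ℝ)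
    (hdiag : ∀ i, 0 < A i i)
    (hlyap : ∃ c : Fin n → ℝ, (∀ i, 0 < c i) ∧
      (A * Matrix.diagonal c + Matrix.diagonal c * Aᵀ).PosDef) :
    ∀ (k : ℕ) (hk : k ≤ n),
      0 < (A.submatrix (Fin.castLE hk) (Fin.castLE hk)).det := by
  obtain ⟨c, hc, hpd⟩ := hlyap
  intro k hk
  set e : Fin k → Fin n := Fin.castLE hk with he
  have hei : Function.Injective e := Fin.castLE_injective hk
  set B : Matrix (Fin k) (Fin k) ℝ := A.submatrix e e with hB
  set d : Fin k → ℝ := c ∘ e with hd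
  have hsub : (A * Matrix.diagonal c + Matrix.diagonal c * Aᵀ).submatrix e e
      = B * Matrix.diagonal d + Matrix.diagonal d * Bᵀ := by
    ext i j
    simp [Matrix.submatrix_apply, Matrix.add_apply, Matrix.mul_diagonal,
      Matrix.diagonal_mul, Matrix.transpose_apply, hB, hd]
  have hquad : ∀ x : Fin k → ℝ, x ≠ 0 → 0 < x ⬝ᵥ ((B * Matrix.diagonal d) *ᵥ x) := by
    intro x hx
    have h1 := quad_pos_submatrix hpd hei x hx
    rw [hsub] at h1
    have h2 : x ⬝ᵥ ((B * Matrix.diagonal d + Matrix.diagonal d * Bᵀ) *ᵥ x)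
        = 2 * (x ⬝ᵥ ((B * Matrix.diagonal d) *ᵥ x)) := by
      rw [Matrix.add_mulVec, dotProduct_add]
      have : Matrix.diagonal d * Bᵀ = (B * Matrix.diagonal d)ᵀ := by
        rw [Matrix.transpose_mul, Matrix.diagonal_transpose]
      rw [this, Matrix.mulVec_transpose]
      nth_rewrite 2 [dotProduct_comm]
      rw [← Matrix.dotProduct_mulVec]
      ring
    rw [h2] at h1
    linarith
  have hdet : 0 < (B * Matrix.diagonal d).det := det_pos_of_quad hquad
  rw [Matrix.det_mul, Matrix.det_diagonal] at hdet
  have hdpos : 0 < ∏ i, d i := Finset.prod_pos (fun i _ => hc (e i))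
  nlinarith [hdet, hdpos]
end

section
/- Consider the network SIS model ẋ = (−D + B − XB)x with B entrywise nonnegative and irreducible and D positive diagonal. If x* ∈ [0,1]ⁿ is a nonzero equilibrium, then every entry of x* lies strictly between 0 and 1: 0 < x*_i < 1 for all i. -/
open Matrix

/-- Irreducibility gives an edge `i → j` from the zero set of `x` to its support, and
`b i j * x j > 0` then contradicts `∑ k, b i k * x k = 0`. -/
theorem IsIrred.pos_of_nonneg {n : ℕ} {b : Matrix (Fin n) (Fin n) ℝ} (hirr : IsIrred b)
    (hb : ∀ i j, 0 ≤ b i j) {x : Fin n → ℝ} (hx : ∀ i, 0 ≤ x i) (hx_ne : x ≠ 0)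
    (hzero : ∀ i, x i = 0 → ∑ j, b i j * x j = 0) (i₀ : Fin n) : 0 < x i₀ := by
  by_contra! hi₀
  have hsupp : ({i | x i = 0}ᶜ : Set (Fin n)).Nonempty := by
    by_contra! h
    exact hx_ne (funext fun i => by simpa using Set.ext_iff.mp h i)
  obtain ⟨i, hi, j, hj, hbij⟩ :=
    hirr {i | x i = 0} ⟨i₀, le_antisymm hi₀ (hx i₀)⟩ hsupp
  have hxj : 0 < x j := (hx j).lt_of_ne (Ne.symm hj)
  have hterm : 0 < b i j * x j := mul_pos ((hb i j).lt_of_ne (Ne.symm hbij)) hxj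
  have hle : b i j * x j ≤ ∑ k, b i k * x k :=
    Finset.single_le_sum (fun k _ => mul_nonneg (hb i k) (hx k)) (Finset.mem_univ j)
  linarith [hzero i hi]

/-- Any nonzero equilibrium of the network SIS model in the unit cube has all its
entries strictly between 0 and 1. -/
theorem SIS_nonzero_equilibrium_interior {n : ℕ}
    (d : Fin n → ℝ) (hd : ∀ i, 0 < d i)
    (b : Matrix (Fin n) (Fin n) ℝ) (hb : ∀ i j, 0 ≤ b i j) (hirr : IsIrred b)
    (x : Fin n → ℝ) (hx_cube : ∀ i, x i ∈ Set.Icc (0 : ℝ) 1) (hx_ne : x ≠ 0)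
    (heq : ∀ i, -(d i) * x i + (1 - x i) * ∑ j, b i j * x j = 0) :
    ∀ i, 0 < x i ∧ x i < 1 := by
  have hpos : ∀ i, 0 < x i := hirr.pos_of_nonneg hb (fun i => (hx_cube i).1) hx_ne
    fun k hk => by simpa [hk] using heq k
  intro i
  refine ⟨hpos i, (hx_cube i).2.lt_of_ne fun h1 => ?_⟩
  have := heq i
  rw [h1] at this
  linarith [hd i]
end

section
/- Consider the network SIS model ẋ = (−D + B − XB)x with B ≥ 0 irreducible and D positive diagonal. If s(−D + B) ≤ 0, then the only equilibrium in the cube [0,1]ⁿ is x = 0. -/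
/-!
Suppose `x ≠ 0`. Irreducibility of `B` spreads positivity, so every `xᵢ > 0`, and the equation
forces `xᵢ < 1`; hence `(-D + B) x = X B x ≥ c x` with `c = minᵢ (B x)ᵢ > 0`. For a Metzler matrix
`M` this is impossible when `s(M) ≤ 0`: the shift `N = M + t I` is nonnegative with
`N x ≥ (c + t) x`, so `‖Nᵐ‖ ≥ (c + t)ᵐ` and Gelfand's formula gives `ρ(N) ≥ c + t`, whereas for `t`
large every eigenvalue `t + μ` of `N` (with `Re μ ≤ 0`, `|μ| ≤ ‖M‖`) has modulus `< c + t`.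
-/

open Matrix

open Filter

attribute [local instance] Matrix.linftyOpNormedAddCommGroup Matrix.linftyOpNormedRing
  Matrix.linftyOpNormedAlgebra

theorem spectrum.ofReal_le_spectralRadius_of_pow_le_norm_pow {A : Type*} [NormedRing A]
    [NormedAlgebra ℂ A] [CompleteSpace A] (a : A) {r : ℝ} (hr : 0 ≤ r)
    (h : ∀ n, r ^ n ≤ ‖a ^ n‖) : ENNReal.ofReal r ≤ spectralRadius ℂ a := by
  refine ge_of_tendsto (spectrum.pow_norm_pow_one_div_tendsto_nhds_spectralRadius a) ?_
  filter_upwards [eventually_ne_atTop 0] with n hn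
  refine ENNReal.ofReal_le_ofReal ?_
  calc r = (r ^ n) ^ (1 / n : ℝ) := by rw [one_div, Real.pow_rpow_inv_natCast hr hn]
    _ ≤ ‖a ^ n‖ ^ (1 / n : ℝ) := by gcongr; exact h n

theorem Pi.norm_le_norm_of_nonneg_of_le {ι : Type*} [Fintype ι] {u v : ι → ℝ} (hu : 0 ≤ u)
    (huv : u ≤ v) : ‖u‖ ≤ ‖v‖ :=
  (pi_norm_le_iff_of_nonneg (norm_nonneg v)).2 fun i => by
    rw [Real.norm_of_nonneg (hu i)]
    exact (huv i).trans ((Real.le_norm_self _).trans (norm_le_pi_norm v i))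

theorem Complex.norm_ofReal_add_lt {μ : ℂ} {t c : ℝ} (hre : μ.re ≤ 0) (hc : 0 < c)
    (hμ : ‖μ‖ ^ 2 < 2 * t * c) : ‖(t : ℂ) + μ‖ < t + c := by
  have ht : 0 < t := by nlinarith [sq_nonneg ‖μ‖]
  have hsq : ‖(t : ℂ) + μ‖ ^ 2 = t ^ 2 + 2 * t * μ.re + ‖μ‖ ^ 2 := by
    simp only [Complex.sq_norm, Complex.normSq_apply, Complex.add_re, Complex.add_im,
      Complex.ofReal_re, Complex.ofReal_im]
    ring
  refine lt_of_pow_lt_pow_left₀ 2 (by positivity) ?_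
  nlinarith

namespace Matrix

theorem linfty_opNorm_map_ofReal {m n : Type*} [Fintype m] [Fintype n] (A : Matrix m n ℝ) :
    ‖A.map ((↑) : ℝ → ℂ)‖ = ‖A‖ := by
  simp [linfty_opNorm_def]

variable {ι : Type*} [Fintype ι]

theorem mulVec_mono_of_nonneg {N : Matrix ι ι ℝ} (hN : ∀ i j, 0 ≤ N i j) {u v : ι → ℝ}
    (huv : u ≤ v) : N *ᵥ u ≤ N *ᵥ v := fun i =>
  Finset.sum_le_sum fun j _ => mul_le_mul_of_nonneg_left (huv j) (hN i j)

variable [DecidableEq ι]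

theorem pow_smul_le_pow_mulVec {N : Matrix ι ι ℝ} (hN : ∀ i j, 0 ≤ N i j) {x : ι → ℝ} {r : ℝ}
    (hr : 0 ≤ r) (h : r • x ≤ N *ᵥ x) (n : ℕ) : r ^ n • x ≤ (N ^ n) *ᵥ x := by
  induction n with
  | zero => simp
  | succ n ih =>
    calc r ^ (n + 1) • x = r ^ n • (r • x) := by rw [pow_succ, mul_smul]
      _ ≤ r ^ n • (N *ᵥ x) := smul_le_smul_of_nonneg_left h (pow_nonneg hr n)
      _ = N *ᵥ (r ^ n • x) := (mulVec_smul N _ x).symm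
      _ ≤ N *ᵥ ((N ^ n) *ᵥ x) := mulVec_mono_of_nonneg hN ih
      _ = (N ^ (n + 1)) *ᵥ x := by rw [mulVec_mulVec, ← pow_succ']

theorem ofReal_le_spectralRadius_of_smul_le_mulVec {N : Matrix ι ι ℝ} (hN : ∀ i j, 0 ≤ N i j)
    {x : ι → ℝ} (hx : 0 ≤ x) (hx0 : x ≠ 0) {r : ℝ} (hr : 0 ≤ r) (h : r • x ≤ N *ᵥ x) :
    ENNReal.ofReal r ≤ spectralRadius ℂ (N.map ((↑) : ℝ → ℂ)) := by
  refine spectrum.ofReal_le_spectralRadius_of_pow_le_norm_pow _ hr fun n => ?_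
  rw [show N.map ((↑) : ℝ → ℂ) ^ n = (N ^ n).map (↑) from
    (Matrix.map_pow N Complex.ofRealHom n).symm, linfty_opNorm_map_ofReal]
  refine le_of_mul_le_mul_right ?_ (norm_pos_iff.2 hx0)
  calc r ^ n * ‖x‖ = ‖r ^ n • x‖ := by rw [norm_smul, Real.norm_of_nonneg (pow_nonneg hr n)]
    _ ≤ ‖(N ^ n) *ᵥ x‖ := Pi.norm_le_norm_of_nonneg_of_le (smul_nonneg (pow_nonneg hr n) hx)
        (pow_smul_le_pow_mulVec hN hr h n)
    _ ≤ ‖N ^ n‖ * ‖x‖ := linfty_opNorm_mulVec _ _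

theorem nonpos_of_smul_le_mulVec {M : Matrix ι ι ℝ} (hM : ∀ i j, i ≠ j → 0 ≤ M i j)
    (hs : ∀ μ ∈ spectrum ℂ (M.map ((↑) : ℝ → ℂ)), μ.re ≤ 0) {x : ι → ℝ} (hx : 0 ≤ x)
    (hx0 : x ≠ 0) {c : ℝ} (h : c • x ≤ M *ᵥ x) : c ≤ 0 := by
  by_contra! hc
  have : Nonempty ι := (Function.ne_iff.1 hx0).nonempty
  set K := ‖M.map ((↑) : ℝ → ℂ)‖
  -- Shift `M` by `t` to a nonnegative matrix whose spectrum lies in the open disc of radius `c + t`.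
  obtain ⟨t, hdiag, hK⟩ : ∃ t, (∀ i, -M i i ≤ t) ∧ K ^ 2 / (2 * c) < t :=
    ((eventually_all.2 fun i => eventually_ge_atTop (-M i i)).and (eventually_gt_atTop _)).exists
  have ht : 0 < t := (div_nonneg (sq_nonneg K) (by positivity)).trans_lt hK
  set N := M + t • (1 : Matrix ι ι ℝ)
  have hN : ∀ i j, 0 ≤ N i j := by
    intro i j
    rcases eq_or_ne i j with rfl | hij
    · simpa [N, add_comm] using neg_le_iff_add_nonneg.1 (hdiag i)
    · simpa [N, one_apply_ne hij] using hM i j hij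
  have hNx : (c + t) • x ≤ N *ᵥ x := by
    rw [add_smul, add_mulVec, smul_mulVec, one_mulVec]
    exact add_le_add_left h _
  have hlow := ofReal_le_spectralRadius_of_smul_le_mulVec hN hx hx0 (by positivity) hNx
  have hNc : N.map ((↑) : ℝ → ℂ) = algebraMap ℂ _ (t : ℂ) + M.map (↑) := by
    rw [add_comm, Algebra.algebraMap_eq_smul_one]
    ext i j
    rcases eq_or_ne i j with rfl | hij <;> simp [N, one_apply_ne, *]
  refine hlow.not_gt (spectrum.spectralRadius_lt_of_forall_lt _ fun z hz => ?_)
  rw [hNc, ← sub_add_cancel z (t : ℂ), spectrum.add_mem_add_iff] at hz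
  have hμ : ‖z - t‖ ^ 2 < 2 * t * c := by
    rw [div_lt_iff₀ (by positivity)] at hK
    nlinarith [spectrum.norm_le_norm_of_mem hz, norm_nonneg (z - t)]
  have hz_lt := Complex.norm_ofReal_add_lt (hs _ hz) hc hμ
  rw [add_sub_cancel] at hz_lt
  rwa [← NNReal.coe_lt_coe, coe_nnnorm, Real.coe_toNNReal _ (by positivity), add_comm]

end Matrix

theorem IsIrred.pos_of_eq_zero_imp_mulVec_eq_zero {n : ℕ} {b : Matrix (Fin n) (Fin n) ℝ}
    (hirr : IsIrred b) (hb : ∀ i j, 0 ≤ b i j) {x : Fin n → ℝ} (hx : 0 ≤ x) (hx0 : x ≠ 0)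
    (hzero : ∀ i, x i = 0 → (b *ᵥ x) i = 0) (i : Fin n) : 0 < x i := by
  by_contra! hi
  obtain ⟨k, hk, j, hj, hkj⟩ := hirr {k | x k = 0} ⟨i, le_antisymm hi (hx i)⟩
    (Function.ne_iff.1 hx0)
  have hsum : ∑ l, b k l * x l = 0 := hzero k hk
  have hterm : b k j * x j = 0 :=
    (Finset.sum_eq_zero_iff_of_nonneg fun l _ => mul_nonneg (hb k l) (hx l)).1 hsum j
      (Finset.mem_univ j)
  exact (mul_ne_zero hkj hj) hterm

/-- If s(−D + B) ≤ 0 (every eigenvalue of −D + B has nonpositive real part), then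
the only equilibrium of the network SIS model in the unit cube is x = 0. -/
theorem SIS_only_healthy_equilibrium {n : ℕ}
    (d : Fin n → ℝ) (hd : ∀ i, 0 < d i)
    (b : Matrix (Fin n) (Fin n) ℝ) (hb : ∀ i j, 0 ≤ b i j) (hirr : IsIrred b)
    (hs : ∀ μ ∈ spectrum ℂ ((-(Matrix.diagonal d) + b).map (Complex.ofReal)),
      μ.re ≤ 0)
    (x : Fin n → ℝ) (hx_cube : ∀ i, x i ∈ Set.Icc (0 : ℝ) 1)
    (heq : ∀ i, -(d i) * x i + (1 - x i) * ∑ j, b i j * x j = 0) :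
    x = 0 := by
  replace heq : ∀ i, -(d i) * x i + (1 - x i) * (b *ᵥ x) i = 0 := heq
  by_contra hx0
  have hx : 0 ≤ x := fun i => (hx_cube i).1
  have hlt : ∀ i, x i < 1 := fun i =>
    (hx_cube i).2.lt_of_ne fun h => by simpa [h, (hd i).ne'] using heq i
  have hpos := hirr.pos_of_eq_zero_imp_mulVec_eq_zero hb hx hx0 fun i h => by simpa [h] using heq i
  have hMx : ∀ i, ((-diagonal d + b) *ᵥ x) i = x i * (b *ᵥ x) i := fun i => by
    rw [add_mulVec, neg_mulVec, Pi.add_apply, Pi.neg_apply, mulVec_diagonal]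
    linarith [heq i]
  have : Nonempty (Fin n) := (Function.ne_iff.1 hx0).nonempty
  obtain ⟨k, hk⟩ := Finite.exists_min fun i => (b *ᵥ x) i
  have hbk : 0 < (b *ᵥ x) k := by
    have : 0 < (1 - x k) * (b *ᵥ x) k := by linarith [heq k, mul_pos (hd k) (hpos k)]
    exact pos_of_mul_pos_right this (by linarith [hlt k])
  refine hbk.not_ge (nonpos_of_smul_le_mulVec (fun i j hij => ?_) hs hx hx0 fun i => ?_)
  · simpa [diagonal_apply_ne _ hij] using hb i j
  · rw [hMx, Pi.smul_apply, smul_eq_mul, mul_comm]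
    exact mul_le_mul_of_nonneg_left (hk i) (hx i)
end

section
/- Consider the controlled SIS model ẋ = (−D − H(x) + B − XB)x where H(x) = diag(h_1(x_1),…,h_n(x_n)), with each h_i : [0,1] → ℝ continuous, nonnegative, nondecreasing, and h_i(0) = 0, B ≥ 0 irreducible and D positive diagonal. If s(−D + B) ≤ 0, then x = 0 is the unique equilibrium in the cube [0,1]ⁿ. -/
/-!
Let `M = -D + B`, a Metzler matrix. At a point `x` of the cube where `x_i > 0`, the equilibrium
equation gives `(Bx)_i > (1 - x_i) (Bx)_i = (d_i + h_i(x_i)) x_i ≥ d_i x_i`, so `(Mx)_i > 0`,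
while `(Mx)_i = (Bx)_i ≥ 0` where `x_i = 0`. Hence `ε x ≤ M x` for some `ε > 0`.
Since `s(M) ≤ 0`, the resolvent `(ε I - M)⁻¹` is entrywise nonnegative, and applying it to
`(ε I - M) x ≤ 0` gives `x ≤ 0`.

For a nonnegative `A`, nonnegativity of `(s I - A)⁻¹` holds for large `s` by the Neumann series,
and it propagates down the half-line on which `s I - A` stays invertible: if it holds at `s₁`,
then for `s` slightly below `s₁`,
`(s I - A)⁻¹ = (1 - (s₁ - s) (s₁ I - A)⁻¹)⁻¹ (s₁ I - A)⁻¹` is again a product of nonnegative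
matrices, and the set where it holds is closed by continuity of the inverse.
-/

open Matrix

open Filter Topology Set

namespace Matrix

variable {m n ι : Type*}

def IsNonneg (A : Matrix m n ℝ) : Prop := ∀ i j, 0 ≤ A i j

def IsMetzler (M : Matrix ι ι ℝ) : Prop := ∀ i j, i ≠ j → 0 ≤ M i j

theorem isClosed_setOf_isNonneg : IsClosed {A : Matrix m n ℝ | A.IsNonneg} := by
  simp only [IsNonneg, ofPred_forall]
  exact isClosed_iInter fun i => isClosed_iInter fun j =>
    isClosed_le continuous_const (continuous_id.matrix_elem i j)

theorem IsNonneg.smul {A : Matrix m n ℝ} (hA : A.IsNonneg) {c : ℝ} (hc : 0 ≤ c) :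
    (c • A).IsNonneg := fun i j => mul_nonneg hc (hA i j)

section Fintype

variable [Fintype ι]

theorem IsNonneg.mul {A B : Matrix ι ι ℝ} (hA : A.IsNonneg) (hB : B.IsNonneg) :
    (A * B).IsNonneg := fun i j =>
  Finset.sum_nonneg fun k _ => mul_nonneg (hA i k) (hB k j)

theorem IsNonneg.mulVec_nonpos {A : Matrix ι ι ℝ} (hA : A.IsNonneg) {v : ι → ℝ} (hv : v ≤ 0) :
    A *ᵥ v ≤ 0 := fun i =>
  Finset.sum_nonpos fun j _ => mul_nonpos_of_nonneg_of_nonpos (hA i j) (hv j)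

end Fintype

variable [DecidableEq ι]

theorem isNonneg_one : (1 : Matrix ι ι ℝ).IsNonneg := fun i j => by
  rw [one_apply]
  split_ifs <;> norm_num

variable [Fintype ι]

theorem IsNonneg.pow {A : Matrix ι ι ℝ} (hA : A.IsNonneg) (k : ℕ) : (A ^ k).IsNonneg := by
  induction k with
  | zero => exact pow_zero A ▸ isNonneg_one
  | succ k ih => exact pow_succ A k ▸ ih.mul hA

section Neumann

attribute [local instance] Matrix.linftyOpNormedRing Matrix.linftyOpNormedAlgebra

theorem IsNonneg.inv_one_sub {e : Matrix ι ι ℝ} (he : e.IsNonneg) (h : ‖e‖ < 1) :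
    (1 - e)⁻¹.IsNonneg := by
  have hsum := hasSum_geom_series_inverse e h
  rw [← nonsing_inv_eq_ringInverse] at hsum
  intro i j
  exact HasSum.nonneg (fun k => he.pow k i j) (Pi.hasSum.1 (Pi.hasSum.1 hsum i) j)

theorem IsNonneg.eventually_inv_one_sub_smul {e : Matrix ι ι ℝ} (he : e.IsNonneg) :
    ∀ᶠ t : ℝ in 𝓝[≥] 0, (1 - t • e)⁻¹.IsNonneg := by
  have hlim : Tendsto (fun t : ℝ => t • e) (𝓝 0) (𝓝 0) := by
    simpa using (tendsto_id (x := 𝓝 (0 : ℝ))).smul_const e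
  have hsmall : ∀ᶠ t in 𝓝[≥] (0 : ℝ), ‖t • e‖ < 1 :=
    (hlim.norm.eventually (gt_mem_nhds (show ‖(0 : Matrix ι ι ℝ)‖ < 1 by simp))).filter_mono
      nhdsWithin_le_nhds
  filter_upwards [self_mem_nhdsWithin, hsmall] with t ht hsmall
  exact (he.smul ht).inv_one_sub hsmall

end Neumann

theorem eventually_isNonneg_inv_sub_smul_one {P : Matrix ι ι ℝ} (hP : IsUnit P.det)
    (hP' : P⁻¹.IsNonneg) : ∀ᶠ t : ℝ in 𝓝[≥] 0, (P - t • 1)⁻¹.IsNonneg := by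
  filter_upwards [hP'.eventually_inv_one_sub_smul] with t ht
  have hfactor : P - t • 1 = P * (1 - t • P⁻¹) := by
    rw [mul_sub, mul_one, mul_smul_comm, mul_nonsing_inv P hP]
  rw [hfactor, mul_inv_rev]
  exact ht.mul hP'

theorem IsNonneg.eventually_inv_smul_one_sub {A : Matrix ι ι ℝ} (hA : A.IsNonneg) :
    ∀ᶠ s : ℝ in atTop, (s • 1 - A)⁻¹.IsNonneg := by
  have hinv : Tendsto (fun s : ℝ => s⁻¹) atTop (𝓝[≥] 0) :=
    tendsto_inv_atTop_nhdsGT_zero.mono_right (nhdsWithin_mono _ Ioi_subset_Ici_self)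
  filter_upwards [hinv.eventually hA.eventually_inv_one_sub_smul, eventually_gt_atTop 0]
    with s hs hpos
  have hfactor : s • 1 - A = (s • 1 : Matrix ι ι ℝ) * (1 - s⁻¹ • A) := by
    rw [mul_sub, mul_one, smul_one_mul, smul_smul, mul_inv_cancel₀ hpos.ne', one_smul]
  have hscalar : (s • 1 : Matrix ι ι ℝ)⁻¹ = s⁻¹ • 1 :=
    inv_eq_left_inv (by rw [smul_mul_smul, inv_mul_cancel₀ hpos.ne', one_mul, one_smul])
  rw [hfactor, mul_inv_rev, hscalar]
  exact hs.mul (isNonneg_one.smul (inv_nonneg.2 hpos.le))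

theorem continuousOn_inv_smul_one_sub (A : Matrix ι ι ℝ) :
    ContinuousOn (fun s : ℝ => (s • 1 - A)⁻¹) {s | IsUnit (s • 1 - A).det} := by
  intro s hs
  refine (continuousAt_matrix_inv _ ?_).comp_continuousWithinAt
    ((continuous_id.smul continuous_const).sub continuous_const).continuousWithinAt
  rw [Ring.inverse_eq_inv']
  exact continuousAt_inv₀ hs.ne_zero

theorem IsNonneg.inv_smul_one_sub_of_forall_isUnit {A : Matrix ι ι ℝ} (hA : A.IsNonneg)
    {s₀ : ℝ} (hdet : ∀ s, s₀ ≤ s → IsUnit (s • 1 - A).det) : (s₀ • 1 - A)⁻¹.IsNonneg := by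
  obtain ⟨T, hT, hs₀T⟩ := (hA.eventually_inv_smul_one_sub.and (eventually_ge_atTop s₀)).exists
  set S := {s : ℝ | (s • 1 - A)⁻¹.IsNonneg}
  have hclosed : IsClosed (S ∩ Icc s₀ T) := by
    rw [inter_comm]
    exact ((continuousOn_inv_smul_one_sub A).mono fun s hs => hdet s hs.1)
      |>.preimage_isClosed_of_isClosed isClosed_Icc isClosed_setOf_isNonneg
  have hstep : ∀ s ∈ S ∩ Ioc s₀ T, ∀ y < s, (S ∩ Ico y s).Nonempty := by
    rintro s ⟨hs, hs₀s, -⟩ y hy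
    have hgap : Tendsto (fun r => s - r) (𝓝[<] s) (𝓝[≥] 0) :=
      tendsto_nhdsWithin_of_tendsto_nhds_of_eventually_within _
        (((continuous_const.sub continuous_id).tendsto' s 0 (sub_self s)).mono_left
          nhdsWithin_le_nhds)
        (eventually_nhdsWithin_of_forall fun r (hr : r < s) => mem_Ici.2 (sub_nonneg.2 hr.le))
    obtain ⟨r, hr, hrI⟩ := ((hgap.eventually
      (eventually_isNonneg_inv_sub_smul_one (hdet s hs₀s.le) hs)).and (Ico_mem_nhdsLT hy)).exists
    have hshift : (s • 1 - A) - (s - r) • 1 = r • 1 - A := by rw [sub_smul]; abel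
    rw [hshift] at hr
    exact ⟨r, hr, hrI⟩
  exact hclosed.Icc_subset_of_forall_exists_lt hT hstep ⟨le_rfl, hs₀T⟩

theorem IsMetzler.isNonneg_inv_smul_one_sub {M : Matrix ι ι ℝ} (hM : M.IsMetzler)
    (hdet : ∀ s : ℝ, 0 < s → IsUnit (s • 1 - M).det) {ε : ℝ} (hε : 0 < ε) :
    (ε • 1 - M)⁻¹.IsNonneg := by
  obtain ⟨c, hc⟩ := Finite.exists_le fun i => -M i i
  have hA : (c • 1 + M).IsNonneg := by
    intro i j
    rcases eq_or_ne i j with rfl | hij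
    · simpa [add_comm, neg_le_iff_add_nonneg'] using hc i
    · simpa [one_apply_ne hij] using hM i j hij
  have hshift : ∀ s : ℝ, s • 1 - (c • 1 + M) = (s - c) • 1 - M := fun s => by
    rw [sub_smul]; abel
  have := hA.inv_smul_one_sub_of_forall_isUnit (s₀ := c + ε) fun s hs =>
    hshift s ▸ hdet _ (by linarith)
  rwa [hshift, add_sub_cancel_left] at this

theorem IsMetzler.nonpos_of_smul_le_mulVec {M : Matrix ι ι ℝ} (hM : M.IsMetzler)
    (hdet : ∀ s : ℝ, 0 < s → IsUnit (s • 1 - M).det) {ε : ℝ} (hε : 0 < ε) {x : ι → ℝ}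
    (hx : ε • x ≤ M *ᵥ x) : x ≤ 0 := by
  set N := ε • 1 - M
  have hNx : N *ᵥ x ≤ 0 := by
    rw [sub_mulVec, smul_mulVec, one_mulVec]
    exact sub_nonpos.2 hx
  have hx_eq : x = N⁻¹ *ᵥ (N *ᵥ x) := by
    rw [mulVec_mulVec, nonsing_inv_mul _ (hdet ε hε), one_mulVec]
  rw [hx_eq]
  exact (hM.isNonneg_inv_smul_one_sub hdet hε).mulVec_nonpos hNx

theorem isUnit_det_smul_one_sub_of_re_nonpos {M : Matrix ι ι ℝ}
    (hM : ∀ μ ∈ spectrum ℂ (M.map Complex.ofReal), μ.re ≤ 0) {s : ℝ} (hs : 0 < s) :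
    IsUnit (s • 1 - M).det := by
  rw [isUnit_iff_ne_zero]
  intro hzero
  have hmap : algebraMap ℂ (Matrix ι ι ℂ) s - M.map Complex.ofReal
      = Complex.ofRealHom.mapMatrix (s • 1 - M) := by
    ext i j
    rcases eq_or_ne i j with rfl | hij
    · simp [algebraMap_eq_diagonal]
    · simp [algebraMap_eq_diagonal, one_apply_ne hij, diagonal_apply_ne _ hij]
  have hmem : (s : ℂ) ∈ spectrum ℂ (M.map Complex.ofReal) := by
    rw [spectrum.mem_iff, isUnit_iff_isUnit_det, hmap, ← RingHom.map_det, hzero, map_zero]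
    exact not_isUnit_zero
  have := hM _ hmem
  rw [Complex.ofReal_re] at this
  linarith

end Matrix

theorem exists_pos_smul_le {ι : Type*} [Finite ι] {x y : ι → ℝ} (hy : 0 ≤ y)
    (hxy : ∀ i, 0 < x i → 0 < y i) : ∃ ε : ℝ, 0 < ε ∧ ε • x ≤ y := by
  have h : ∀ i, ∀ᶠ ε in 𝓝[>] (0 : ℝ), ε * x i ≤ y i := by
    intro i
    rcases lt_or_ge 0 (x i) with hx | hx
    · have hlim : Tendsto (fun ε => ε * x i) (𝓝 0) (𝓝 0) := by
        simpa using (tendsto_id (x := 𝓝 (0 : ℝ))).mul_const (x i)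
      exact ((hlim.eventually (gt_mem_nhds (hxy i hx))).filter_mono nhdsWithin_le_nhds).mono
        fun _ h => h.le
    · exact eventually_nhdsWithin_of_forall fun ε (hε : 0 < ε) =>
        (mul_nonpos_of_nonneg_of_nonpos hε.le hx).trans (hy i)
  obtain ⟨ε, hε, hεpos⟩ := ((eventually_all.2 h).and self_mem_nhdsWithin).exists
  exact ⟨ε, hεpos, hε⟩

theorem sis_recovery_lt_infection {x y d η : ℝ} (hx : 0 < x) (hx1 : x ≤ 1) (hd : 0 < d)
    (hη : 0 ≤ η) (heq : (d + η) * x = (1 - x) * y) : d * x < y := by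
  have hpos : 0 < (1 - x) * y := heq ▸ mul_pos (by linarith) hx
  have hy : 0 < y := pos_of_mul_pos_right hpos (by linarith)
  nlinarith [mul_pos hx hy, mul_nonneg hη hx.le]

theorem controlled_SIS_only_healthy_equilibrium_general {n : ℕ}
    (d : Fin n → ℝ) (hd : ∀ i, 0 < d i)
    (b : Matrix (Fin n) (Fin n) ℝ) (hb : ∀ i j, 0 ≤ b i j)
    (h : Fin n → ℝ → ℝ)
    (hnonneg : ∀ i, ∀ s ∈ Set.Icc (0 : ℝ) 1, 0 ≤ h i s)
    (hs : ∀ μ ∈ spectrum ℂ ((-(Matrix.diagonal d) + b).map (Complex.ofReal)),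
      μ.re ≤ 0)
    (x : Fin n → ℝ) (hx_cube : ∀ i, x i ∈ Set.Icc (0 : ℝ) 1)
    (heq : ∀ i, (d i + h i (x i)) * x i - (1 - x i) * ∑ j, b i j * x j = 0) :
    x = 0 := by
  set M := -diagonal d + b
  have hMetzler : M.IsMetzler := fun i j hij => by simpa [M, diagonal_apply_ne _ hij] using hb i j
  have hMx : ∀ i, (M *ᵥ x) i = ∑ j, b i j * x j - d i * x i := fun i => by
    simp only [M, add_mulVec, neg_mulVec, Pi.add_apply, Pi.neg_apply, mulVec_diagonal]
    rw [mulVec, dotProduct]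
    ring
  have hMx_pos : ∀ i, 0 < x i → 0 < (M *ᵥ x) i := fun i hi => by
    rw [hMx, sub_pos]
    exact sis_recovery_lt_infection hi (hx_cube i).2 (hd i) (hnonneg i _ (hx_cube i))
      (sub_eq_zero.1 (heq i))
  have hMx_nonneg : 0 ≤ M *ᵥ x := fun i => by
    rcases (hx_cube i).1.eq_or_lt with hzero | hi
    · rw [hMx, ← hzero, mul_zero, sub_zero]
      exact Finset.sum_nonneg fun j _ => mul_nonneg (hb i j) (hx_cube j).1
    · exact (hMx_pos i hi).le
  obtain ⟨ε, hε, hεx⟩ := exists_pos_smul_le hMx_nonneg hMx_pos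
  exact le_antisymm
    (hMetzler.nonpos_of_smul_le_mulVec (fun _ => isUnit_det_smul_one_sub_of_re_nonpos hs) hε hεx)
    fun i => (hx_cube i).1

/-- For the controlled SIS model with controllers h_i : [0,1] → ℝ continuous,
nonnegative, nondecreasing and h_i(0) = 0: if s(−D + B) ≤ 0 then x = 0 is the
unique equilibrium in the unit cube. -/
theorem controlled_SIS_only_healthy_equilibrium {n : ℕ}
    (d : Fin n → ℝ) (hd : ∀ i, 0 < d i)
    (b : Matrix (Fin n) (Fin n) ℝ) (hb : ∀ i j, 0 ≤ b i j) (hirr : IsIrred b)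
    (h : Fin n → ℝ → ℝ)
    (hcont : ∀ i, ContinuousOn (h i) (Set.Icc 0 1))
    (hnonneg : ∀ i, ∀ s ∈ Set.Icc (0 : ℝ) 1, 0 ≤ h i s)
    (hmono : ∀ i, MonotoneOn (h i) (Set.Icc 0 1))
    (hzero : ∀ i, h i 0 = 0)
    (hs : ∀ μ ∈ spectrum ℂ ((-(Matrix.diagonal d) + b).map (Complex.ofReal)),
      μ.re ≤ 0)
    (x : Fin n → ℝ) (hx_cube : ∀ i, x i ∈ Set.Icc (0 : ℝ) 1)
    (heq : ∀ i, (d i + h i (x i)) * x i - (1 - x i) * ∑ j, b i j * x j = 0) :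
    x = 0 :=
  controlled_SIS_only_healthy_equilibrium_general d hd b hb h hnonneg hs x hx_cube heq
end

section
/- Let A be an n×n matrix such that −A has positive diagonal entries, nonpositive off-diagonal entries (i.e., a_ii < 0 and a_ij ≥ 0 for i ≠ j), and all leading principal minors of −A are positive. Then for every diagonal matrix X̄ with strictly positive diagonal entries, and every matrix J satisfying J_ii ≤ a_ii and |J_ij| ≤ a_ij for i ≠ j, the matrix X̄J is Hurwitz (all eigenvalues have negative real part). -/
open Matrix

lemma schur_det {k : ℕ} (P : Matrix (Fin (k+1)) (Fin (k+1)) ℝ) (ha : P 0 0 ≠ 0) :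
    P.det = P 0 0 *
      (Matrix.of fun i j : Fin k =>
        P i.succ j.succ - P i.succ 0 * P 0 j.succ / P 0 0).det := by
  set Q : Matrix (Fin (k+1)) (Fin (k+1)) ℝ := Matrix.of fun i j =>
    if i = 0 then P 0 j else if j = 0 then 0 else P i j - P i 0 * P 0 j / P 0 0 with hQ
  set E : Matrix (Fin (k+1)) (Fin (k+1)) ℝ := Matrix.of fun i j =>
    if j = 0 ∧ i ≠ 0 then P i 0 / P 0 0 else 0 with hE
  have hEQ : ∀ i j, (E * Q) i j = if i = 0 then 0 else P i 0 / P 0 0 * Q 0 j := by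
    intro i j
    rw [mul_apply]
    have h1 : ∀ m, E i m * Q m j
        = if m = 0 then (if i = 0 then 0 else P i 0 / P 0 0 * Q 0 j) else 0 := by
      intro m
      by_cases hm : m = 0 <;> by_cases hi : i = 0 <;> simp [hE, hm, hi]
    rw [Finset.sum_congr rfl fun m _ => h1 m, Finset.sum_ite_eq' Finset.univ 0]
    simp
  have hfact : P = (1 + E) * Q := by
    ext i j
    rw [add_mul, one_mul, Matrix.add_apply, hEQ]
    by_cases hi : i = 0
    · simp [hQ, hi]
    · by_cases hj : j = 0
      · subst hj
        simp only [hQ, Matrix.of_apply, if_neg hi, if_pos rfl, if_pos rfl, hi, if_false]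
        field_simp
        simp
      · simp only [hQ, Matrix.of_apply, if_neg hi, if_neg hj, hi, if_false, if_pos rfl,
          if_true]
        field_simp
        ring
  have hdetE : ((1 : Matrix (Fin (k+1)) (Fin (k+1)) ℝ) + E).det = 1 := by
    rw [Matrix.det_of_lowerTriangular]
    · rw [Finset.prod_eq_one]
      intro i _
      simp [hE, Matrix.one_apply]
    · intro i j hij
      have hji : i < j := hij
      have hj0 : j ≠ 0 := Fin.ne_of_gt (lt_of_le_of_lt (Fin.zero_le i) hji)
      have hne : i ≠ j := ne_of_lt hji
      simp [hE, Matrix.one_apply, hne, hj0]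
  have hdetQ : Q.det = P 0 0 *
      (Matrix.of fun i j : Fin k =>
        P i.succ j.succ - P i.succ 0 * P 0 j.succ / P 0 0).det := by
    rw [Matrix.det_succ_column_zero]
    rw [Finset.sum_eq_single 0]
    · have hsub : (Q.submatrix (Fin.succAbove 0) Fin.succ) =
        (Matrix.of fun i j : Fin k =>
          P i.succ j.succ - P i.succ 0 * P 0 j.succ / P 0 0) := by
        ext i j
        simp [hQ, Fin.succ_ne_zero, Fin.succAbove_zero]
      rw [hsub]
      simp [hQ]
    · intro b _ hb
      simp [hQ, hb]
    · simp
  have : P.det = Q.det := by rw [hfact, Matrix.det_mul, hdetE, one_mul]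
  rw [this, hdetQ]

lemma exists_delta {n : ℕ} (f g : Fin n → ℝ) (hf : ∀ i, 0 < f i) (hg : ∀ i, 0 ≤ g i) :
    ∃ δ : ℝ, 0 < δ ∧ ∀ i, δ * g i < f i := by
  rcases isEmpty_or_nonempty (Fin n) with h | h
  · exact ⟨1, one_pos, fun i => isEmptyElim i⟩
  · have hne : (Finset.univ : Finset (Fin n)).Nonempty := Finset.univ_nonempty
    refine ⟨Finset.univ.inf' hne (fun i => f i / (g i + 1)), ?_, ?_⟩
    · rw [Finset.lt_inf'_iff]
      intro i _
      exact div_pos (hf i) (by linarith [hg i])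
    · intro i
      have h1 : Finset.univ.inf' hne (fun i => f i / (g i + 1)) ≤ f i / (g i + 1) :=
        Finset.inf'_le _ (Finset.mem_univ i)
      have h2 : 0 < Finset.univ.inf' hne (fun i => f i / (g i + 1)) := by
        rw [Finset.lt_inf'_iff]
        intro i _
        exact div_pos (hf i) (by linarith [hg i])
      calc Finset.univ.inf' hne (fun i => f i / (g i + 1)) * g i
          < Finset.univ.inf' hne (fun i => f i / (g i + 1)) * (g i + 1) := by
            apply mul_lt_mul_of_pos_left _ h2; linarith
        _ ≤ f i / (g i + 1) * (g i + 1) := by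
            apply mul_le_mul_of_nonneg_right h1; linarith [hg i]
        _ = f i := div_mul_cancel₀ (f i) (by linarith [hg i])

lemma mmatrix_pos_vec : ∀ (n : ℕ) (M : Matrix (Fin n) (Fin n) ℝ),
    (∀ i j, i ≠ j → M i j ≤ 0) →
    (∀ (k : ℕ) (hk : k ≤ n), 0 < (M.submatrix (Fin.castLE hk) (Fin.castLE hk)).det) →
    ∃ d : Fin n → ℝ, (∀ i, 0 < d i) ∧ ∀ i, 0 < ∑ j, M i j * d j := by
  intro n
  induction n with
  | zero => exact fun M _ _ => ⟨fun i => 1, fun i => isEmptyElim i, fun i => isEmptyElim i⟩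
  | succ n ih =>
    intro M hoff hmin
    have ha : 0 < M 0 0 := by
      have := hmin 1 (by omega)
      rwa [Matrix.det_fin_one] at this
    set a := M 0 0 with haa
    set N : Matrix (Fin n) (Fin n) ℝ := Matrix.of fun i j =>
      M i.succ j.succ - M i.succ 0 * M 0 j.succ / a with hN
    have hNoff : ∀ i j, i ≠ j → N i j ≤ 0 := by
      intro i j hij
      have h1 : M i.succ j.succ ≤ 0 := hoff _ _ (by simpa using hij)
      have h2 : M i.succ 0 ≤ 0 := hoff _ _ (Fin.succ_ne_zero i)
      have h3 : M 0 j.succ ≤ 0 := (hoff 0 j.succ (Fin.succ_ne_zero j).symm)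
      have : 0 ≤ M i.succ 0 * M 0 j.succ / a := div_nonneg (by nlinarith) ha.le
      simp only [hN, Matrix.of_apply]
      linarith
    have hNmin : ∀ (k : ℕ) (hk : k ≤ n),
        0 < (N.submatrix (Fin.castLE hk) (Fin.castLE hk)).det := by
      intro k hk
      have hk1 : k + 1 ≤ n + 1 := by omega
      set P := M.submatrix (Fin.castLE hk1) (Fin.castLE hk1) with hP
      have hP00 : P 0 0 = a := by simp [hP, Fin.castLE, haa]
      have key : P.det = P 0 0 *
          (Matrix.of fun i j : Fin k =>
            P i.succ j.succ - P i.succ 0 * P 0 j.succ / P 0 0).det :=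
        schur_det P (by rw [hP00]; exact ha.ne')
      have hsub : (Matrix.of fun i j : Fin k =>
            P i.succ j.succ - P i.succ 0 * P 0 j.succ / P 0 0)
          = N.submatrix (Fin.castLE hk) (Fin.castLE hk) := by
        ext i j
        have e1 : Fin.castLE hk1 (i.succ) = (Fin.castLE hk i).succ := by
          apply Fin.ext; simp [Fin.castLE]
        have e2 : Fin.castLE hk1 (j.succ) = (Fin.castLE hk j).succ := by
          apply Fin.ext; simp [Fin.castLE]
        have e3 : Fin.castLE hk1 (0 : Fin (k+1)) = 0 := rfl
        simp only [Matrix.of_apply, Matrix.submatrix_apply, hP, hN, e1, e2, e3, hP00, haa]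
      have hPdet : 0 < P.det := hmin (k+1) hk1
      rw [key, hsub, hP00] at hPdet
      by_contra hcon
      push_neg at hcon
      nlinarith
    obtain ⟨e, he, hNe⟩ := ih N hNoff hNmin
    have hs : ∑ j, M 0 j.succ * e j ≤ 0 := by
      apply Finset.sum_nonpos
      intro j _
      exact mul_nonpos_of_nonpos_of_nonneg (hoff 0 j.succ (Fin.succ_ne_zero j).symm) (he j).le
    set s := ∑ j, M 0 j.succ * e j with hsdef
    obtain ⟨δ, hδ, hδlt⟩ := exists_delta (fun i => ∑ j, N i j * e j)
      (fun i => -M i.succ 0 / a) hNe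
      (fun i => div_nonneg (by linarith [hoff i.succ 0 (Fin.succ_ne_zero i)]) ha.le)
    set d0 : ℝ := (δ - s) / a with hd0def
    have hd0 : 0 < d0 := div_pos (by linarith) ha
    refine ⟨Fin.cases d0 e, fun i => ?_, fun i => ?_⟩
    · induction i using Fin.cases with
      | zero => simpa using hd0
      | succ i => simpa using he i
    · rw [Fin.sum_univ_succ]
      simp only [Fin.cases_zero, Fin.cases_succ]
      induction i using Fin.cases with
      | zero =>
        have : M 0 0 * d0 = δ - s := by rw [hd0def]; field_simp; rw [haa]; ring
        rw [this]
        simp only [← hsdef]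
        linarith
      | succ i =>
        have expand : ∑ j, N i j * e j
            = ∑ j, M i.succ j.succ * e j - M i.succ 0 / a * s := by
          rw [hsdef, Finset.mul_sum, ← Finset.sum_sub_distrib]
          apply Finset.sum_congr rfl
          intro j _
          simp only [hN, Matrix.of_apply]
          ring
        have h1 := hδlt i
        have h2 : M i.succ 0 * d0 = M i.succ 0 / a * (δ - s) := by
          rw [hd0def]; ring
        have : M i.succ 0 * d0 + ∑ j, M i.succ j.succ * e j
            = ∑ j, N i j * e j + M i.succ 0 / a * δ := by
          rw [expand, h2]; ring
        rw [this]
        have : M i.succ 0 / a * δ = -(δ * (-M i.succ 0 / a)) := by ring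
        rw [this]
        linarith

/-- Lotka–Volterra Jacobian stability: if −A has positive diagonal, nonpositive
off-diagonal entries, and all positive leading principal minors, then for any
positive diagonal X̄ and any comparison matrix J (J_ii ≤ a_ii, |J_ij| ≤ a_ij for
i ≠ j), the matrix X̄ J is Hurwitz. -/
theorem lotka_volterra_jacobian_hurwitz {n : ℕ}
    (A : Matrix (Fin n) (Fin n) ℝ)
    (hdiag : ∀ i, A i i < 0)
    (hoff : ∀ i j, i ≠ j → 0 ≤ A i j)
    (hminors : ∀ (k : ℕ) (hk : k ≤ n),
      0 < ((-A).submatrix (Fin.castLE hk) (Fin.castLE hk)).det)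
    (xbar : Fin n → ℝ) (hxbar : ∀ i, 0 < xbar i)
    (J : Matrix (Fin n) (Fin n) ℝ)
    (hJdiag : ∀ i, J i i ≤ A i i)
    (hJoff : ∀ i j, i ≠ j → |J i j| ≤ A i j) :
    ∀ μ ∈ spectrum ℂ ((Matrix.diagonal xbar * J).map (Complex.ofReal)),
      μ.re < 0 := by
  intro μ hμ
  -- get positive vector d with (-A) d > 0
  obtain ⟨d, hd, hAd⟩ := mmatrix_pos_vec n (-A)
    (fun i j hij => by simpa using hoff i j hij) hminors
  -- dominance for J
  have hdomJ : ∀ k, ∑ j ∈ Finset.univ.erase k, |J k j| * d j < -(J k k) * d k := by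
    intro k
    have h1 : ∑ j ∈ Finset.univ.erase k, |J k j| * d j
        ≤ ∑ j ∈ Finset.univ.erase k, A k j * d j := by
      apply Finset.sum_le_sum
      intro j hj
      exact mul_le_mul_of_nonneg_right (hJoff k j (Finset.ne_of_mem_erase hj).symm) (hd j).le
    have h2 := hAd k
    rw [← Finset.add_sum_erase _ _ (Finset.mem_univ k)] at h2
    simp only [Matrix.neg_apply] at h2 ⊢
    have h3 : ∑ j ∈ Finset.univ.erase k, -A k j * d j
        = -∑ j ∈ Finset.univ.erase k, A k j * d j := by
      rw [← Finset.sum_neg_distrib]; apply Finset.sum_congr rfl; intro j _; ring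
    rw [h3] at h2
    have h4 : ∑ j ∈ Finset.univ.erase k, A k j * d j < -A k k * d k := by linarith
    have h5 : -A k k * d k ≤ -J k k * d k :=
      mul_le_mul_of_nonneg_right (by linarith [hJdiag k]) (hd k).le
    linarith
  set K : Matrix (Fin n) (Fin n) ℝ := Matrix.diagonal xbar * J with hK
  have hKentry : ∀ i j, K i j = xbar i * J i j := by
    intro i j; simp [hK, Matrix.diagonal_mul]
  set M' : Matrix (Fin n) (Fin n) ℂ := K.map Complex.ofReal with hM'
  -- eigenvector of M'
  have hEig : Module.End.HasEigenvalue (Matrix.toLin' M') μ := by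
    rw [Module.End.hasEigenvalue_iff_mem_spectrum]
    have : Matrix.toLin' M' = Matrix.toLinAlgEquiv' M' := by
      ext v i
      rfl
    rw [this, AlgEquiv.spectrum_eq Matrix.toLinAlgEquiv' M']
    exact hμ
  obtain ⟨v, hv_mem, hv_nz⟩ := hEig.exists_hasEigenvector
  have hv : M' *ᵥ v = μ • v := by
    have := Module.End.mem_eigenspace_iff.mp hv_mem
    rwa [Matrix.toLin'_apply] at this
  -- conjugated matrix
  set B : Matrix (Fin n) (Fin n) ℂ := Matrix.of fun i j =>
    ((d i : ℂ))⁻¹ * M' i j * (d j : ℂ) with hB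
  set w : Fin n → ℂ := fun i => ((d i : ℂ))⁻¹ * v i with hw
  have hdne : ∀ i, (d i : ℂ) ≠ 0 := fun i => by
    exact_mod_cast Complex.ofReal_ne_zero.mpr (hd i).ne'
  have hw_nz : w ≠ 0 := by
    intro hcon
    apply hv_nz
    ext i
    have := congrFun hcon i
    simp only [hw, Pi.zero_apply] at this ⊢
    exact (mul_eq_zero.mp this).elim (fun h => absurd h (inv_ne_zero (hdne i))) id
  have hBw : B *ᵥ w = μ • w := by
    ext i
    have hMv := congrFun hv i
    simp only [Matrix.mulVec, dotProduct, Pi.smul_apply, smul_eq_mul] at hMv ⊢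
    calc ∑ j, B i j * w j = (d i : ℂ)⁻¹ * ∑ j, M' i j * v j := by
          rw [Finset.mul_sum]
          apply Finset.sum_congr rfl
          intro j _
          simp only [hB, hw, Matrix.of_apply]
          have hc : (↑(d j) : ℂ) * (↑(d j))⁻¹ = 1 := mul_inv_cancel₀ (hdne j)
          calc (↑(d i))⁻¹ * M' i j * ↑(d j) * ((↑(d j))⁻¹ * v j)
              = (↑(d i))⁻¹ * (M' i j * v j) * (↑(d j) * (↑(d j))⁻¹) := by ring
            _ = (↑(d i))⁻¹ * (M' i j * v j) := by rw [hc, mul_one]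
        _ = μ * w i := by rw [hMv, hw]; ring
  have hEigB : Module.End.HasEigenvalue (Matrix.toLin' B) μ :=
    Module.End.hasEigenvalue_of_hasEigenvector
      ⟨Module.End.mem_eigenspace_iff.mpr (by rw [Matrix.toLin'_apply, hBw]), hw_nz⟩
  obtain ⟨k, hk⟩ := eigenvalue_mem_ball hEigB
  rw [Metric.mem_closedBall, dist_eq_norm] at hk
  have hBkk : B k k = ((K k k : ℝ) : ℂ) := by
    simp only [hB, Matrix.of_apply, hM', Matrix.map_apply]
    field_simp
    exact mul_div_cancel_left₀ _ (hdne k)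
  have hBnorm : ∀ j, j ≠ k → ‖B k j‖ = (d k)⁻¹ * |K k j| * d j := by
    intro j hj
    simp only [hB, Matrix.of_apply, hM', Matrix.map_apply]
    rw [norm_mul, norm_mul, norm_inv]
    rw [show ‖((d k : ℝ) : ℂ)‖ = |d k| from by rw [Complex.norm_real, Real.norm_eq_abs]]
    rw [show ‖((d j : ℝ) : ℂ)‖ = |d j| from by rw [Complex.norm_real, Real.norm_eq_abs]]
    rw [show ‖((K k j : ℝ) : ℂ)‖ = |K k j| from by rw [Complex.norm_real, Real.norm_eq_abs]]
    rw [abs_of_pos (hd k), abs_of_pos (hd j)]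
  have hsum : ∑ j ∈ Finset.univ.erase k, ‖B k j‖ < -(K k k) := by
    have h1 : ∑ j ∈ Finset.univ.erase k, ‖B k j‖
        = (d k)⁻¹ * ∑ j ∈ Finset.univ.erase k, |K k j| * d j := by
      rw [Finset.mul_sum]
      apply Finset.sum_congr rfl
      intro j hj
      rw [hBnorm j (Finset.ne_of_mem_erase hj)]
      ring
    have h2 : ∑ j ∈ Finset.univ.erase k, |K k j| * d j < -(K k k) * d k := by
      have : ∀ j, j ≠ k → |K k j| = xbar k * |J k j| := by
        intro j _
        rw [hKentry, abs_mul, abs_of_pos (hxbar k)]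
      calc ∑ j ∈ Finset.univ.erase k, |K k j| * d j
          = xbar k * ∑ j ∈ Finset.univ.erase k, |J k j| * d j := by
            rw [Finset.mul_sum]
            apply Finset.sum_congr rfl
            intro j hj
            rw [this j (Finset.ne_of_mem_erase hj)]; ring
        _ < xbar k * (-(J k k) * d k) :=
            mul_lt_mul_of_pos_left (hdomJ k) (hxbar k)
        _ = -(K k k) * d k := by rw [hKentry]; ring
    rw [h1]
    calc (d k)⁻¹ * ∑ j ∈ Finset.univ.erase k, |K k j| * d j
        < (d k)⁻¹ * (-(K k k) * d k) := by
          apply mul_lt_mul_of_pos_left h2 (inv_pos.mpr (hd k))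
      _ = -(K k k) := by
          rw [mul_comm, mul_assoc, mul_inv_cancel₀ (hd k).ne', mul_one]
  rw [hBkk] at hk
  have hre : μ.re - K k k ≤ ‖μ - ((K k k : ℝ) : ℂ)‖ := by
    have h := Complex.re_le_norm (μ - ((K k k : ℝ) : ℂ))
    rw [Complex.sub_re, Complex.ofReal_re] at h
    exact h
  linarith
end
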